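/- arXiv:1504.07434 — 13 statements merged into one kernel-verified Lean document; each statement's English description precedes it below -/
import Mathlib

section
/- The natural transformation θ := (Ω⁻¹F)∘(UΛ) : B∘C → C∘B is a lax morphism of monads from 𝔹 to 𝔹 along C, i.e. (Cμ)∘(θB)∘(Bθ) = θ∘(μC) and θ∘(ηC) = Cη. -/
/-!
The mate `Λ_X` is the adjunct of `Cη_X ≫ Ω_{FX}`, so `η ≫ UΛ = Cη ≫ Ω`, and cancelling `Ω` against
`Ω⁻¹` gives the unit law. For the multiplication law, naturality of `Ω` and the triangle identity
show that `Λ_{UY} ≫ Sε_Y` is the adjunct of `Ω_Y`; hence `FΩ⁻¹_Y ≫ Λ_{UY} ≫ Sε_Y = ε_{SY}`, which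
collapses `(Cμ)∘(θB)∘(Bθ)` to `U(FUΛ ≫ εSF) ≫ Ω⁻¹F = U(εFC ≫ Λ) ≫ Ω⁻¹F = θ∘(μC)`.
-/

open CategoryTheory

namespace Stmt0

variable {A B : Type*} [Category A] [Category B]

/-- The mate `Λ : F∘C ⟶ S∘F` of `Ω`, componentwise:
`Λ = (εSF) ∘ (FΩF) ∘ (FCη)`. -/
def mate (F : A ⥤ B) (U : B ⥤ A) (adj : F ⊣ U) (S : B ⥤ B) (C : A ⥤ A)
    (Ω : U ⋙ C ≅ S ⋙ U) (X : A) : F.obj (C.obj X) ⟶ S.obj (F.obj X) :=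
  F.map (C.map (adj.unit.app X)) ≫ F.map (Ω.hom.app (F.obj X)) ≫
    adj.counit.app (S.obj (F.obj X))

/-- `θ := (Ω⁻¹F) ∘ (UΛ) : B∘C ⟶ C∘B`, componentwise. -/
def theta (F : A ⥤ B) (U : B ⥤ A) (adj : F ⊣ U) (S : B ⥤ B) (C : A ⥤ A)
    (Ω : U ⋙ C ≅ S ⋙ U) (X : A) :
    U.obj (F.obj (C.obj X)) ⟶ C.obj (U.obj (F.obj X)) :=
  U.map (mate F U adj S C Ω X) ≫ Ω.inv.app (F.obj X)

section

variable {F : A ⥤ B} {U : B ⥤ A} (adj : F ⊣ U) {S : B ⥤ B} {C : A ⥤ A} (Ω : U ⋙ C ≅ S ⋙ U)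

lemma mate_eq_homEquiv_symm (X : A) :
    mate F U adj S C Ω X =
      (adj.homEquiv _ _).symm (C.map (adj.unit.app X) ≫ Ω.hom.app (F.obj X)) := by
  simp [mate, Adjunction.homEquiv_counit]

lemma unit_comp_map_mate (X : A) :
    adj.unit.app (C.obj X) ≫ U.map (mate F U adj S C Ω X) =
      C.map (adj.unit.app X) ≫ Ω.hom.app (F.obj X) := by
  have h := (adj.homEquiv _ _).apply_symm_apply (C.map (adj.unit.app X) ≫ Ω.hom.app (F.obj X))
  rwa [Adjunction.homEquiv_unit, ← mate_eq_homEquiv_symm] at h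

lemma mate_comp_map_counit (Y : B) :
    mate F U adj S C Ω (U.obj Y) ≫ S.map (adj.counit.app Y) =
      (adj.homEquiv _ _).symm (Ω.hom.app Y) := by
  have hΩ : Ω.hom.app (F.obj (U.obj Y)) ≫ U.map (S.map (adj.counit.app Y)) =
      C.map (U.map (adj.counit.app Y)) ≫ Ω.hom.app Y :=
    (Ω.hom.naturality (adj.counit.app Y)).symm
  rw [mate_eq_homEquiv_symm, ← Adjunction.homEquiv_naturality_right_symm, Category.assoc, hΩ,
    ← C.map_comp_assoc, adj.right_triangle_components]
  simp only [Functor.id_obj, C.map_id, Category.id_comp]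
  rfl

lemma map_inv_comp_mate_comp_map_counit (Y : B) :
    F.map (Ω.inv.app Y) ≫ mate F U adj S C Ω (U.obj Y) ≫ S.map (adj.counit.app Y) =
      adj.counit.app (S.obj Y) := by
  rw [mate_comp_map_counit, Adjunction.homEquiv_counit, ← F.map_comp_assoc,
    Iso.inv_hom_id_app, F.map_id, Category.id_comp]

lemma unit_comp_theta (X : A) :
    adj.unit.app (C.obj X) ≫ theta F U adj S C Ω X = C.map (adj.unit.app X) := by
  rw [theta, reassoc_of% unit_comp_map_mate, Iso.hom_inv_id_app]
  exact Category.comp_id _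

lemma map_theta_comp_theta_comp_map_counit (X : A) :
    U.map (F.map (theta F U adj S C Ω X)) ≫ theta F U adj S C Ω (U.obj (F.obj X)) ≫
        C.map (U.map (adj.counit.app (F.obj X))) =
      U.map (adj.counit.app (F.obj (C.obj X))) ≫ theta F U adj S C Ω X := by
  have hΩ : Ω.inv.app (F.obj (U.obj (F.obj X))) ≫ C.map (U.map (adj.counit.app (F.obj X))) =
      U.map (S.map (adj.counit.app (F.obj X))) ≫ Ω.inv.app (F.obj X) :=
    (Ω.inv.naturality (adj.counit.app (F.obj X))).symm
  have hε : F.map (U.map (mate F U adj S C Ω X)) ≫ adj.counit.app (S.obj (F.obj X)) =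
      adj.counit.app (F.obj (C.obj X)) ≫ mate F U adj S C Ω X :=
    adj.counit.naturality (mate F U adj S C Ω X)
  simp only [theta, Category.assoc, hΩ]
  simp only [← U.map_comp_assoc, F.map_comp, Category.assoc, map_inv_comp_mate_comp_map_counit, hε]

end

/-- `θ` is a lax morphism of monads from `𝔹` to `𝔹` along `C`. -/
theorem theta_is_lax_morphism_of_monads
    (F : A ⥤ B) (U : B ⥤ A) (adj : F ⊣ U) (S : B ⥤ B) (C : A ⥤ A)
    (Ω : U ⋙ C ≅ S ⋙ U) :
    -- multiplication compatibility: `(Cμ)∘(θB)∘(Bθ) = θ∘(μC)`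
    (∀ X : A,
      U.map (F.map (theta F U adj S C Ω X)) ≫
        theta F U adj S C Ω (U.obj (F.obj X)) ≫
        C.map (U.map (adj.counit.app (F.obj X)))
      = U.map (adj.counit.app (F.obj (C.obj X))) ≫ theta F U adj S C Ω X) ∧
    -- unit compatibility: `θ∘(ηC) = Cη`
    (∀ X : A,
      adj.unit.app (C.obj X) ≫ theta F U adj S C Ω X = C.map (adj.unit.app X)) :=
  ⟨map_theta_comp_theta_comp_map_counit adj Ω, unit_comp_theta adj Ω⟩

end Stmt0
end

section
/- The natural transformation χ := (ΛU)∘(FΩ⁻¹) : T∘S → S∘T is a lax morphism of comonads from 𝕋 to 𝕋 along S, i.e. (χT)∘(Tχ)∘(Δ^T S) = (SΔ^T)∘χ and (Sε^T)∘χ = ε^T S. -/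
/-!
Both identities are checked after transposing along `F ⊣ U`. The transpose of `χ_Y` is
`Ω⁻¹_Y ≫ C(η_{UY}) ≫ Ω_{FUY} : USY ⟶ USFUY`; composed with `USε_Y` it collapses to the identity
by naturality of `Ω` and the triangle identity `η_U ≫ Uε = 𝟙`, and the comultiplication square
reduces, after cancelling `Ω_{FUY} ≫ Ω⁻¹_{FUY}`, to naturality of `Ω` along `Fη_{UY}` together
with naturality of `η` along `η_{UY}`.
-/

open CategoryTheory

namespace Stmt1

variable {A B : Type*} [Category A] [Category B]

/-- The mate `Λ : F∘C ⟶ S∘F` of `Ω`, componentwise: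
`Λ = (εSF) ∘ (FΩF) ∘ (FCη)`. -/
def mate (F : A ⥤ B) (U : B ⥤ A) (adj : F ⊣ U) (S : B ⥤ B) (C : A ⥤ A)
    (Ω : U ⋙ C ≅ S ⋙ U) (X : A) : F.obj (C.obj X) ⟶ S.obj (F.obj X) :=
  F.map (C.map (adj.unit.app X)) ≫ F.map (Ω.hom.app (F.obj X)) ≫
    adj.counit.app (S.obj (F.obj X))

/-- `χ := (ΛU) ∘ (FΩ⁻¹) : T∘S ⟶ S∘T`, componentwise. -/
def chi (F : A ⥤ B) (U : B ⥤ A) (adj : F ⊣ U) (S : B ⥤ B) (C : A ⥤ A)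
    (Ω : U ⋙ C ≅ S ⋙ U) (Y : B) :
    F.obj (U.obj (S.obj Y)) ⟶ S.obj (F.obj (U.obj Y)) :=
  F.map (Ω.inv.app Y) ≫ mate F U adj S C Ω (U.obj Y)

section

variable (F : A ⥤ B) (U : B ⥤ A) (adj : F ⊣ U) (S : B ⥤ B) (C : A ⥤ A)
  (Ω : U ⋙ C ≅ S ⋙ U)

lemma mate_eq_homEquiv_symm (X : A) :
    mate F U adj S C Ω X =
      (adj.homEquiv (C.obj X) _).symm (C.map (adj.unit.app X) ≫ Ω.hom.app (F.obj X)) := by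
  simp [mate, Adjunction.homEquiv_counit]

lemma homEquiv_chi (Y : B) :
    adj.homEquiv _ _ (chi F U adj S C Ω Y) =
      Ω.inv.app Y ≫ C.map (adj.unit.app (U.obj Y)) ≫ Ω.hom.app (F.obj (U.obj Y)) := by
  rw [← Equiv.eq_symm_apply, chi, mate_eq_homEquiv_symm]
  exact (adj.homEquiv_naturality_left_symm _ _).symm

lemma chi_comp_map_counit (Y : B) :
    chi F U adj S C Ω Y ≫ S.map (adj.counit.app Y) = adj.counit.app (S.obj Y) := by
  apply (adj.homEquiv _ _).injective
  have hΩ : Ω.hom.app (F.obj (U.obj Y)) ≫ U.map (S.map (adj.counit.app Y)) =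
      C.map (U.map (adj.counit.app Y)) ≫ Ω.hom.app Y :=
    (Ω.hom.naturality (adj.counit.app Y)).symm
  rw [adj.homEquiv_naturality_right, homEquiv_chi, Category.assoc, Category.assoc, hΩ,
    ← C.map_comp_assoc, adj.right_triangle_components, C.map_id, Category.id_comp,
    Iso.inv_hom_id_app, Adjunction.homEquiv_unit, adj.right_triangle_components]
  rfl

lemma map_unit_comp_map_chi_comp_chi (Y : B) :
    F.map (adj.unit.app (U.obj (S.obj Y))) ≫ F.map (U.map (chi F U adj S C Ω Y)) ≫
        chi F U adj S C Ω (F.obj (U.obj Y)) =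
      chi F U adj S C Ω Y ≫ S.map (F.map (adj.unit.app (U.obj Y))) := by
  apply (adj.homEquiv _ _).injective
  have hΩ : Ω.hom.app (F.obj (U.obj Y)) ≫ U.map (S.map (F.map (adj.unit.app (U.obj Y)))) =
      C.map (U.map (F.map (adj.unit.app (U.obj Y)))) ≫
        Ω.hom.app (F.obj (U.obj (F.obj (U.obj Y)))) :=
    (Ω.hom.naturality (F.map (adj.unit.app (U.obj Y)))).symm
  have hχ := homEquiv_chi F U adj S C Ω Y
  rw [Adjunction.homEquiv_unit] at hχ
  rw [← F.map_comp_assoc, adj.homEquiv_naturality_left, adj.homEquiv_naturality_right]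
  dsimp only [Functor.id_obj]
  rw [hχ, homEquiv_chi, homEquiv_chi]
  simp only [Category.assoc, Iso.hom_inv_id_app_assoc, hΩ, ← C.map_comp_assoc,
    adj.unit_naturality]
  rfl

end

/-- `χ` is a lax morphism of comonads from `𝕋` to `𝕋` along `S`. -/
theorem chi_is_lax_morphism_of_comonads
    (F : A ⥤ B) (U : B ⥤ A) (adj : F ⊣ U) (S : B ⥤ B) (C : A ⥤ A)
    (Ω : U ⋙ C ≅ S ⋙ U) :
    -- comultiplication compatibility: `(χT)∘(Tχ)∘(Δ^T S) = (SΔ^T)∘χ`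
    (∀ Y : B,
      F.map (adj.unit.app (U.obj (S.obj Y))) ≫
        F.map (U.map (chi F U adj S C Ω Y)) ≫
        chi F U adj S C Ω (F.obj (U.obj Y))
      = chi F U adj S C Ω Y ≫ S.map (F.map (adj.unit.app (U.obj Y)))) ∧
    -- counit compatibility: `(Sε^T)∘χ = ε^T S`
    (∀ Y : B,
      chi F U adj S C Ω Y ≫ S.map (adj.counit.app Y)
        = adj.counit.app (S.obj Y)) :=
  ⟨map_unit_comp_map_chi_comp_chi F U adj S C Ω, chi_comp_map_counit F U adj S C Ω⟩

end Stmt1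
end

section
/- The natural transformation θ := (Ω⁻¹F)∘(UΛ) is the unique lax morphism of monads θ' : B∘C → C∘B along C (i.e. satisfying (Cμ)∘(θ'B)∘(Bθ') = θ'∘(μC) and θ'∘(ηC) = Cη) such that (CUε)∘(θ'U) = Ω⁻¹∘(UεS)∘(UFΩ) as natural transformations UFCU → CU. -/
/-!
A transformation `θ' : B∘C ⟶ C∘B` is recovered from its composite with `CUε` on objects
of the form `UY`: by naturality along `η` and the triangle identity,
`θ'_X = (UFCη_X) ≫ θ'_{UFX} ≫ (CUε_{FX})`. Hence the diagram condition determines `θ'`.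
For `θ` itself the diagram follows from the naturality of `Ω` and `ε` and the other triangle
identity; the multiplication axiom is the diagram at `FX` combined with naturality of `ε`
along `Λ`, and the unit axiom is naturality of `η`.
-/

open CategoryTheory

namespace Stmt2

variable {A B : Type*} [Category A] [Category B]

/-- The mate `Λ : F∘C ⟶ S∘F` of `Ω`, componentwise. -/
def mate (F : A ⥤ B) (U : B ⥤ A) (adj : F ⊣ U) (S : B ⥤ B) (C : A ⥤ A)
    (Ω : U ⋙ C ≅ S ⋙ U) (X : A) : F.obj (C.obj X) ⟶ S.obj (F.obj X) :=
  F.map (C.map (adj.unit.app X)) ≫ F.map (Ω.hom.app (F.obj X)) ≫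
    adj.counit.app (S.obj (F.obj X))

/-- `θ := (Ω⁻¹F) ∘ (UΛ) : B∘C ⟶ C∘B`, componentwise. -/
def theta (F : A ⥤ B) (U : B ⥤ A) (adj : F ⊣ U) (S : B ⥤ B) (C : A ⥤ A)
    (Ω : U ⋙ C ≅ S ⋙ U) (X : A) :
    U.obj (F.obj (C.obj X)) ⟶ C.obj (U.obj (F.obj X)) :=
  U.map (mate F U adj S C Ω X) ≫ Ω.inv.app (F.obj X)

theorem app_eq_map_unit_comp_app_comp_counit {D : Type*} [Category D] {F : A ⥤ B} {U : B ⥤ A}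
    (adj : F ⊣ U) {P H : A ⥤ D} (θ' : P ⟶ (F ⋙ U) ⋙ H) (X : A) :
    θ'.app X = P.map (adj.unit.app X) ≫ θ'.app (U.obj (F.obj X)) ≫
      H.map (U.map (adj.counit.app (F.obj X))) := by
  have hnat : P.map (adj.unit.app X) ≫ θ'.app (U.obj (F.obj X)) =
      θ'.app X ≫ H.map (U.map (F.map (adj.unit.app X))) := θ'.naturality (adj.unit.app X)
  rw [reassoc_of% hnat, ← H.map_comp, ← U.map_comp, adj.left_triangle_components,
    U.map_id, H.map_id, Category.comp_id]

section

variable (F : A ⥤ B) (U : B ⥤ A) (adj : F ⊣ U) (S : B ⥤ B) (C : A ⥤ A)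
  (Ω : U ⋙ C ≅ S ⋙ U)

theorem theta_comp_counit (Y : B) :
    theta F U adj S C Ω (U.obj Y) ≫ C.map (U.map (adj.counit.app Y))
      = U.map (F.map (Ω.hom.app Y)) ≫ U.map (adj.counit.app (S.obj Y)) ≫ Ω.inv.app Y := by
  have hinv := Ω.inv.naturality (adj.counit.app Y)
  have hhom := Ω.hom.naturality (adj.counit.app Y)
  have hcou := adj.counit.naturality (S.map (adj.counit.app Y))
  simp only [Functor.comp_map, Functor.id_obj, Functor.comp_obj, Functor.id_map] at hinv hhom hcou
  simp only [theta, mate, Functor.map_comp, Category.assoc]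
  rw [← hinv, ← U.map_comp_assoc (adj.counit.app (S.obj (F.obj (U.obj Y)))), ← hcou,
    U.map_comp_assoc, ← U.map_comp_assoc (F.map (Ω.hom.app (F.obj (U.obj Y)))), ← F.map_comp,
    ← hhom, F.map_comp, U.map_comp_assoc,
    ← U.map_comp_assoc (F.map (C.map (adj.unit.app (U.obj Y)))), ← F.map_comp, ← C.map_comp,
    adj.right_triangle_components]
  simp

theorem theta_mul (X : A) :
    U.map (F.map (theta F U adj S C Ω X)) ≫ theta F U adj S C Ω (U.obj (F.obj X)) ≫
        C.map (U.map (adj.counit.app (F.obj X)))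
      = U.map (adj.counit.app (F.obj (C.obj X))) ≫ theta F U adj S C Ω X := by
  have hcou := adj.counit.naturality (mate F U adj S C Ω X)
  simp only [Functor.comp_map, Functor.id_map] at hcou
  rw [theta_comp_counit]
  simp only [theta, Functor.map_comp, Category.assoc]
  rw [← U.map_comp_assoc (F.map (Ω.inv.app (F.obj X))), ← F.map_comp, Iso.inv_hom_id_app,
    F.map_id, U.map_id, Category.id_comp, ← U.map_comp_assoc, hcou, U.map_comp_assoc]

theorem unit_comp_theta (X : A) :
    adj.unit.app (C.obj X) ≫ theta F U adj S C Ω X = C.map (adj.unit.app X) := by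
  have hC := adj.unit.naturality (C.map (adj.unit.app X))
  have hΩ := adj.unit.naturality (Ω.hom.app (F.obj X))
  simp only [Functor.comp_map, Functor.id_obj, Functor.id_map, Functor.comp_obj] at hC hΩ
  simp only [theta, mate, Functor.map_comp]
  slice_lhs 1 2 => rw [← hC]
  slice_lhs 2 3 => rw [← hΩ]
  simp

theorem eq_theta_of_comp_counit (θ' : C ⋙ F ⋙ U ⟶ (F ⋙ U) ⋙ C)
    (hθ' : ∀ Y : B, θ'.app (U.obj Y) ≫ C.map (U.map (adj.counit.app Y))
      = U.map (F.map (Ω.hom.app Y)) ≫ U.map (adj.counit.app (S.obj Y)) ≫ Ω.inv.app Y)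
    (X : A) : θ'.app X = theta F U adj S C Ω X := by
  rw [app_eq_map_unit_comp_app_comp_counit adj θ' X, hθ']
  simp [theta, mate]

end

/-- `θ` is the unique lax morphism of monads `θ' : B∘C → C∘B` along `C`
satisfying `(CUε)∘(θ'U) = Ω⁻¹∘(UεS)∘(UFΩ)`. -/
theorem theta_unique
    (F : A ⥤ B) (U : B ⥤ A) (adj : F ⊣ U) (S : B ⥤ B) (C : A ⥤ A)
    (Ω : U ⋙ C ≅ S ⋙ U) :
    -- `θ` is a lax morphism of monads:
    (∀ X : A,
      U.map (F.map (theta F U adj S C Ω X)) ≫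
        theta F U adj S C Ω (U.obj (F.obj X)) ≫
        C.map (U.map (adj.counit.app (F.obj X)))
      = U.map (adj.counit.app (F.obj (C.obj X))) ≫ theta F U adj S C Ω X) ∧
    (∀ X : A,
      adj.unit.app (C.obj X) ≫ theta F U adj S C Ω X = C.map (adj.unit.app X)) ∧
    -- `θ` makes the diagram commute:
    (∀ Y : B,
      theta F U adj S C Ω (U.obj Y) ≫ C.map (U.map (adj.counit.app Y))
      = U.map (F.map (Ω.hom.app Y)) ≫ U.map (adj.counit.app (S.obj Y)) ≫
          Ω.inv.app Y) ∧
    -- and it is the unique such lax morphism: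
    (∀ θ' : (C ⋙ F ⋙ U : A ⥤ A) ⟶ ((F ⋙ U) ⋙ C : A ⥤ A),
      (∀ X : A,
        U.map (F.map (θ'.app X)) ≫ θ'.app (U.obj (F.obj X)) ≫
          C.map (U.map (adj.counit.app (F.obj X)))
        = U.map (adj.counit.app (F.obj (C.obj X))) ≫ θ'.app X) →
      (∀ X : A,
        adj.unit.app (C.obj X) ≫ θ'.app X = C.map (adj.unit.app X)) →
      (∀ Y : B,
        θ'.app (U.obj Y) ≫ C.map (U.map (adj.counit.app Y))
        = U.map (F.map (Ω.hom.app Y)) ≫ U.map (adj.counit.app (S.obj Y)) ≫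
            Ω.inv.app Y) →
      ∀ X : A, θ'.app X = theta F U adj S C Ω X) :=
  ⟨theta_mul F U adj S C Ω, unit_comp_theta F U adj S C Ω, theta_comp_counit F U adj S C Ω,
    fun θ' _ _ hθ' => eq_theta_of_comp_counit F U adj S C Ω θ' hθ'⟩

end Stmt2
end

section
/- The natural transformation χ := (ΛU)∘(FΩ⁻¹) is the unique lax morphism of comonads χ' : T∘S → S∘T along S (i.e. satisfying (χ'T)∘(Tχ')∘(Δ^T S) = (SΔ^T)∘χ' and (Sε^T)∘χ' = ε^T S) such that (Uχ')∘(ηUS) = (ΩFU)∘(CηU)∘Ω⁻¹ as natural transformations US → USFU. -/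
/-!
Everything is read off the adjunct `(ΩFU)∘(CηU)∘Ω⁻¹ : US ⟶ USFU` of `χ`: a morphism out of an object
`F X` is determined by its adjunct, so the third condition alone pins `χ'` down, and the two comonad
axioms for `χ` reduce, on adjuncts, to naturality of `Ω` and `η` and the triangle identity `Uε ∘ ηU = 1`.
-/

open CategoryTheory

namespace Stmt3

variable {A B : Type*} [Category A] [Category B]

/-- The mate `Λ : F∘C ⟶ S∘F` of `Ω`, componentwise. -/
def mate (F : A ⥤ B) (U : B ⥤ A) (adj : F ⊣ U) (S : B ⥤ B) (C : A ⥤ A)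
    (Ω : U ⋙ C ≅ S ⋙ U) (X : A) : F.obj (C.obj X) ⟶ S.obj (F.obj X) :=
  F.map (C.map (adj.unit.app X)) ≫ F.map (Ω.hom.app (F.obj X)) ≫
    adj.counit.app (S.obj (F.obj X))

/-- `χ := (ΛU) ∘ (FΩ⁻¹) : T∘S ⟶ S∘T`, componentwise. -/
def chi (F : A ⥤ B) (U : B ⥤ A) (adj : F ⊣ U) (S : B ⥤ B) (C : A ⥤ A)
    (Ω : U ⋙ C ≅ S ⋙ U) (Y : B) :
    F.obj (U.obj (S.obj Y)) ⟶ S.obj (F.obj (U.obj Y)) :=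
  F.map (Ω.inv.app Y) ≫ mate F U adj S C Ω (U.obj Y)

section Transpose

variable {F : A ⥤ B} {U : B ⥤ A} (adj : F ⊣ U) {S : B ⥤ B} {C : A ⥤ A} (Ω : U ⋙ C ≅ S ⋙ U)

def chiTranspose (Y : B) : U.obj (S.obj Y) ⟶ U.obj (S.obj (F.obj (U.obj Y))) :=
  Ω.inv.app Y ≫ C.map (adj.unit.app (U.obj Y)) ≫ Ω.hom.app (F.obj (U.obj Y))

theorem chi_eq_map_chiTranspose_comp_counit (Y : B) :
    chi F U adj S C Ω Y =
      F.map (chiTranspose adj Ω Y) ≫ adj.counit.app (S.obj (F.obj (U.obj Y))) := by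
  simp only [chi, mate, chiTranspose, Functor.map_comp, Category.assoc]

theorem unit_comp_map_chi (Y : B) :
    adj.unit.app (U.obj (S.obj Y)) ≫ U.map (chi F U adj S C Ω Y) = chiTranspose adj Ω Y :=
  (adj.unit_comp_map_eq_iff _ _).2 (chi_eq_map_chiTranspose_comp_counit adj Ω Y)

theorem chiTranspose_comp_map_map_counit (Y : B) :
    chiTranspose adj Ω Y ≫ U.map (S.map (adj.counit.app Y)) = 𝟙 _ := by
  have hΩ := Ω.hom.naturality (adj.counit.app Y)
  dsimp only [Functor.comp_map, Functor.comp_obj, Functor.id_obj] at hΩ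
  rw [chiTranspose, Category.assoc, Category.assoc, ← hΩ, ← C.map_comp_assoc,
    adj.right_triangle_components, C.map_id, Category.id_comp, Iso.inv_hom_id_app]
  rfl

theorem chiTranspose_comp_chiTranspose (Y : B) :
    chiTranspose adj Ω Y ≫ chiTranspose adj Ω (F.obj (U.obj Y)) =
      chiTranspose adj Ω Y ≫ U.map (S.map (F.map (adj.unit.app (U.obj Y)))) := by
  have hΩ := Ω.hom.naturality (F.map (adj.unit.app (U.obj Y)))
  dsimp only [Functor.comp_map, Functor.comp_obj, Functor.id_obj] at hΩ
  simp only [chiTranspose, Category.assoc, Iso.hom_inv_id_app_assoc]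
  rw [← hΩ, ← C.map_comp_assoc, ← C.map_comp_assoc, adj.unit_naturality]

theorem map_unit_comp_map_map_chi_comp_chi (Y : B) :
    F.map (adj.unit.app (U.obj (S.obj Y))) ≫ F.map (U.map (chi F U adj S C Ω Y)) ≫
        chi F U adj S C Ω (F.obj (U.obj Y)) =
      chi F U adj S C Ω Y ≫ S.map (F.map (adj.unit.app (U.obj Y))) := by
  apply (adj.homEquiv _ _).injective
  simp only [Adjunction.homEquiv_unit, Functor.map_comp, Functor.id_obj,
    Adjunction.unit_naturality_assoc, unit_comp_map_chi, reassoc_of% (unit_comp_map_chi adj Ω Y)]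
  exact chiTranspose_comp_chiTranspose adj Ω Y

theorem chi_comp_map_counit (Y : B) :
    chi F U adj S C Ω Y ≫ S.map (adj.counit.app Y) = adj.counit.app (S.obj Y) := by
  rw [chi_eq_map_chiTranspose_comp_counit, Category.assoc, ← adj.counit_naturality,
    ← F.map_comp_assoc, chiTranspose_comp_map_map_counit, F.map_id, Category.id_comp]
  rfl

theorem eq_chi_of_unit_comp_map_eq {Y : B} (f : F.obj (U.obj (S.obj Y)) ⟶ S.obj (F.obj (U.obj Y)))
    (hf : adj.unit.app (U.obj (S.obj Y)) ≫ U.map f = chiTranspose adj Ω Y) :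
    f = chi F U adj S C Ω Y := by
  rw [(adj.unit_comp_map_eq_iff _ _).1 hf, chi_eq_map_chiTranspose_comp_counit]

end Transpose

/-- `χ` is the unique lax morphism of comonads `χ' : T∘S → S∘T` along `S`
satisfying `(Uχ')∘(ηUS) = (ΩFU)∘(CηU)∘Ω⁻¹`. -/
theorem chi_unique
    (F : A ⥤ B) (U : B ⥤ A) (adj : F ⊣ U) (S : B ⥤ B) (C : A ⥤ A)
    (Ω : U ⋙ C ≅ S ⋙ U) :
    -- `χ` is a lax morphism of comonads:
    (∀ Y : B,
      F.map (adj.unit.app (U.obj (S.obj Y))) ≫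
        F.map (U.map (chi F U adj S C Ω Y)) ≫
        chi F U adj S C Ω (F.obj (U.obj Y))
      = chi F U adj S C Ω Y ≫ S.map (F.map (adj.unit.app (U.obj Y)))) ∧
    (∀ Y : B,
      chi F U adj S C Ω Y ≫ S.map (adj.counit.app Y) = adj.counit.app (S.obj Y)) ∧
    -- `χ` makes the diagram commute:
    (∀ Y : B,
      adj.unit.app (U.obj (S.obj Y)) ≫ U.map (chi F U adj S C Ω Y)
      = Ω.inv.app Y ≫ C.map (adj.unit.app (U.obj Y)) ≫
          Ω.hom.app (F.obj (U.obj Y))) ∧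
    -- and it is the unique such lax morphism:
    (∀ χ' : (S ⋙ U ⋙ F : B ⥤ B) ⟶ ((U ⋙ F) ⋙ S : B ⥤ B),
      (∀ Y : B,
        F.map (adj.unit.app (U.obj (S.obj Y))) ≫
          F.map (U.map (χ'.app Y)) ≫ χ'.app (F.obj (U.obj Y))
        = χ'.app Y ≫ S.map (F.map (adj.unit.app (U.obj Y)))) →
      (∀ Y : B,
        χ'.app Y ≫ S.map (adj.counit.app Y) = adj.counit.app (S.obj Y)) →
      (∀ Y : B,
        adj.unit.app (U.obj (S.obj Y)) ≫ U.map (χ'.app Y)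
        = Ω.inv.app Y ≫ C.map (adj.unit.app (U.obj Y)) ≫
            Ω.hom.app (F.obj (U.obj Y))) →
      ∀ Y : B, χ'.app Y = chi F U adj S C Ω Y) := by
  exact ⟨map_unit_comp_map_map_chi_comp_chi adj Ω, chi_comp_map_counit adj Ω,
    unit_comp_map_chi adj Ω, fun χ' _ _ hχ' Y => eq_chi_of_unit_comp_map_eq adj Ω _ (hχ' Y)⟩

end Stmt3
end

section
/- If ℂ = (C, Δ^C, ε^C) and 𝕊 = (S, Δ^S, ε^S) are comonads and Ω is a lax morphism of comonads, then χ := (ΛU)∘(FΩ⁻¹) : T∘S → S∘T is a comonad distributive law between 𝕋 and 𝕊, i.e. (Sε^T)∘χ = ε^T S, (ε^S T)∘χ = Tε^S, (SΔ^T)∘χ = (χT)∘(Tχ)∘(Δ^T S), and (Δ^S T)∘χ = (Sχ)∘(χS)∘(TΔ^S). -/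
/-!
STATEMENT 5: If `ℂ = (C, Δ^C, ε^C)` and `𝕊 = (S, Δ^S, ε^S)` are comonads and
`Ω : C∘U ≅ U∘S` is a lax morphism of comonads, then `χ := (ΛU)∘(FΩ⁻¹) : T∘S → S∘T`
is a comonad distributive law between `𝕋 = (FU, FηU, ε)` and `𝕊`.
-/

open CategoryTheory

namespace Stmt5

variable {A B : Type*} [Category A] [Category B]

/-- The mate `Λ : F∘C ⟶ S∘F` of `Ω`, componentwise. -/
def mate (F : A ⥤ B) (U : B ⥤ A) (adj : F ⊣ U) (S : B ⥤ B) (C : A ⥤ A)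
    (Ω : U ⋙ C ≅ S ⋙ U) (X : A) : F.obj (C.obj X) ⟶ S.obj (F.obj X) :=
  F.map (C.map (adj.unit.app X)) ≫ F.map (Ω.hom.app (F.obj X)) ≫
    adj.counit.app (S.obj (F.obj X))

/-- `χ := (ΛU) ∘ (FΩ⁻¹) : T∘S ⟶ S∘T`, componentwise. -/
def chi (F : A ⥤ B) (U : B ⥤ A) (adj : F ⊣ U) (S : B ⥤ B) (C : A ⥤ A)
    (Ω : U ⋙ C ≅ S ⋙ U) (Y : B) :
    F.obj (U.obj (S.obj Y)) ⟶ S.obj (F.obj (U.obj Y)) :=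
  F.map (Ω.inv.app Y) ≫ mate F U adj S C Ω (U.obj Y)

/- Every law is an equation between maps out of some `F.obj X`, so it suffices to compare
adjoint transposes. The transpose of `χ_Y` is `Ω⁻¹ ≫ C η ≫ Ω`; in this form the laws for `ε^T`
and `Δ^T` reduce to naturality of `Ω` together with the triangle identity and naturality of `η`,
and the laws for `ε^S` and `Δ^S` reduce to the two lax-morphism conditions (the one for `Δ` used
with `Ω` inverted) and naturality of `ε^C` and `Δ^C`. -/

lemma hom_ext_of_unit_comp_map {F : A ⥤ B} {U : B ⥤ A} (adj : F ⊣ U) {X : A} {Z : B}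
    {f g : F.obj X ⟶ Z}
    (h : adj.unit.app X ≫ U.map f = adj.unit.app X ≫ U.map g) : f = g :=
  (adj.homEquiv X Z).injective (by simpa [Adjunction.homEquiv_unit] using h)

section
variable {F : A ⥤ B} {U : B ⥤ A} (adj : F ⊣ U)

lemma unit_comp_map_chi {S : B ⥤ B} {C : A ⥤ A} (Ω : U ⋙ C ≅ S ⋙ U) (Y : B) :
    adj.unit.app (U.obj (S.obj Y)) ≫ U.map (chi F U adj S C Ω Y)
    = Ω.inv.app Y ≫ C.map (adj.unit.app (U.obj Y)) ≫ Ω.hom.app (F.obj (U.obj Y)) := by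
  simp [chi, mate]

lemma chi_comp_map_counit {S : B ⥤ B} {C : A ⥤ A} (Ω : U ⋙ C ≅ S ⋙ U) (Y : B) :
    chi F U adj S C Ω Y ≫ S.map (adj.counit.app Y) = adj.counit.app (S.obj Y) := by
  apply hom_ext_of_unit_comp_map adj
  have h := Ω.hom.naturality (adj.counit.app Y)
  simp only [Functor.comp_map, Functor.comp_obj] at h
  simp [reassoc_of% unit_comp_map_chi, ← h, ← Functor.map_comp_assoc]

lemma chi_comp_counit {S : Comonad B} {C : Comonad A} (Ω : U ⋙ C.toFunctor ≅ S.toFunctor ⋙ U)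
    (hΩε : ∀ Y : B, Ω.hom.app Y ≫ U.map (S.ε.app Y) = C.ε.app (U.obj Y)) (Y : B) :
    chi F U adj S.toFunctor C.toFunctor Ω Y ≫ S.ε.app (F.obj (U.obj Y))
      = F.map (U.map (S.ε.app Y)) := by
  apply hom_ext_of_unit_comp_map adj
  have h := C.ε.naturality (adj.unit.app (U.obj Y))
  simp only [Functor.id_map, Functor.comp_obj, Functor.id_obj] at h
  rw [U.map_comp, reassoc_of% unit_comp_map_chi, hΩε, h, ← hΩε Y]
  simp

lemma chi_comp_map_map_unit {S : B ⥤ B} {C : A ⥤ A} (Ω : U ⋙ C ≅ S ⋙ U) (Y : B) :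
    chi F U adj S C Ω Y ≫ S.map (F.map (adj.unit.app (U.obj Y)))
      = F.map (adj.unit.app (U.obj (S.obj Y))) ≫ F.map (U.map (chi F U adj S C Ω Y)) ≫
          chi F U adj S C Ω (F.obj (U.obj Y)) := by
  apply hom_ext_of_unit_comp_map adj
  have h := Ω.hom.naturality (F.map (adj.unit.app (U.obj Y)))
  simp only [Functor.comp_map, Functor.comp_obj, Functor.id_obj] at h
  rw [U.map_comp, reassoc_of% unit_comp_map_chi, ← h, U.map_comp, U.map_comp]
  erw [adj.unit_naturality_assoc, adj.unit_naturality_assoc]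
  rw [unit_comp_map_chi, reassoc_of% unit_comp_map_chi]
  simp only [Iso.hom_inv_id_app_assoc, ← C.map_comp_assoc, adj.unit_naturality]

lemma map_δ_comp_inv_comp_map_inv {S : Comonad B} {C : Comonad A}
    (Ω : U ⋙ C.toFunctor ≅ S.toFunctor ⋙ U) (Y : B)
    (hΩδ : Ω.hom.app Y ≫ U.map (S.δ.app Y)
      = C.δ.app (U.obj Y) ≫ C.map (Ω.hom.app Y) ≫ Ω.hom.app (S.obj Y)) :
    U.map (S.δ.app Y) ≫ Ω.inv.app (S.obj Y) ≫ C.map (Ω.inv.app Y)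
      = Ω.inv.app Y ≫ C.δ.app (U.obj Y) := by
  calc U.map (S.δ.app Y) ≫ Ω.inv.app (S.obj Y) ≫ C.map (Ω.inv.app Y)
      = Ω.inv.app Y ≫ (Ω.hom.app Y ≫ U.map (S.δ.app Y)) ≫ Ω.inv.app (S.obj Y) ≫
          C.map (Ω.inv.app Y) := by simp
    _ = Ω.inv.app Y ≫ C.δ.app (U.obj Y) := by
      rw [hΩδ]
      simp [← C.map_comp]

lemma chi_comp_δ {S : Comonad B} {C : Comonad A} (Ω : U ⋙ C.toFunctor ≅ S.toFunctor ⋙ U)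
    (hΩδ : ∀ Y : B, Ω.hom.app Y ≫ U.map (S.δ.app Y)
      = C.δ.app (U.obj Y) ≫ C.map (Ω.hom.app Y) ≫ Ω.hom.app (S.obj Y)) (Y : B) :
    chi F U adj S.toFunctor C.toFunctor Ω Y ≫ S.δ.app (F.obj (U.obj Y))
      = F.map (U.map (S.δ.app Y)) ≫ chi F U adj S.toFunctor C.toFunctor Ω (S.obj Y) ≫
          S.map (chi F U adj S.toFunctor C.toFunctor Ω Y) := by
  apply hom_ext_of_unit_comp_map adj
  have hδ := C.δ.naturality (adj.unit.app (U.obj Y))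
  have h := Ω.hom.naturality (chi F U adj S.toFunctor C.toFunctor Ω Y)
  simp only [Functor.comp_map, Functor.comp_obj, Functor.id_obj] at hδ h
  rw [U.map_comp, reassoc_of% unit_comp_map_chi, hΩδ, reassoc_of% hδ, U.map_comp, U.map_comp]
  erw [adj.unit_naturality_assoc]
  simp only [Functor.comp_obj]
  rw [reassoc_of% unit_comp_map_chi, ← h,
    ← C.map_comp_assoc (adj.unit.app _), unit_comp_map_chi]
  simp only [Functor.map_comp, Category.assoc]
  rw [reassoc_of% map_δ_comp_inv_comp_map_inv Ω Y (hΩδ Y)]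

end

/-- If `ℂ` and `𝕊` are comonads and `Ω` is a lax morphism of comonads, then
`χ` is a comonad distributive law between `𝕋` and `𝕊`. -/
theorem chi_comonad_distributive_law
    (F : A ⥤ B) (U : B ⥤ A) (adj : F ⊣ U)
    (SS : Comonad B) (CC : Comonad A)
    (Ω : U ⋙ CC.toFunctor ≅ SS.toFunctor ⋙ U)
    -- `Ω` is a lax morphism of comonads: `(UΔ^S)∘Ω = (ΩS)∘(CΩ)∘(Δ^C U)`
    (hΩδ : ∀ Y : B,
      Ω.hom.app Y ≫ U.map (SS.δ.app Y)
      = CC.δ.app (U.obj Y) ≫ CC.map (Ω.hom.app Y) ≫ Ω.hom.app (SS.obj Y))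
    -- and `(Uε^S)∘Ω = ε^C U`
    (hΩε : ∀ Y : B, Ω.hom.app Y ≫ U.map (SS.ε.app Y) = CC.ε.app (U.obj Y)) :
    -- `(Sε^T)∘χ = ε^T S`
    (∀ Y : B,
      chi F U adj SS.toFunctor CC.toFunctor Ω Y ≫ SS.map (adj.counit.app Y)
      = adj.counit.app (SS.obj Y)) ∧
    -- `(ε^S T)∘χ = Tε^S`
    (∀ Y : B,
      chi F U adj SS.toFunctor CC.toFunctor Ω Y ≫ SS.ε.app (F.obj (U.obj Y))
      = F.map (U.map (SS.ε.app Y))) ∧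
    -- `(SΔ^T)∘χ = (χT)∘(Tχ)∘(Δ^T S)`
    (∀ Y : B,
      chi F U adj SS.toFunctor CC.toFunctor Ω Y ≫
        SS.map (F.map (adj.unit.app (U.obj Y)))
      = F.map (adj.unit.app (U.obj (SS.obj Y))) ≫
          F.map (U.map (chi F U adj SS.toFunctor CC.toFunctor Ω Y)) ≫
          chi F U adj SS.toFunctor CC.toFunctor Ω (F.obj (U.obj Y))) ∧
    -- `(Δ^S T)∘χ = (Sχ)∘(χS)∘(TΔ^S)`
    (∀ Y : B,
      chi F U adj SS.toFunctor CC.toFunctor Ω Y ≫ SS.δ.app (F.obj (U.obj Y))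
      = F.map (U.map (SS.δ.app Y)) ≫
          chi F U adj SS.toFunctor CC.toFunctor Ω (SS.obj Y) ≫
          SS.map (chi F U adj SS.toFunctor CC.toFunctor Ω Y)) :=
  ⟨chi_comp_map_counit adj Ω, chi_comp_counit adj Ω hΩε, chi_comp_map_map_unit adj Ω,
    chi_comp_δ adj Ω hΩδ⟩

end Stmt5
end

section
/- Let χ^S : TS → ST and χ^V : TV → VT be the lax morphisms of comonads determined by the two lifts S and V via Theorem 2.7, i.e. χ^S = (Λ_Ω U)∘(FΩ⁻¹) and χ^V = (Λ_Φ U)∘(FΦ⁻¹) where Λ_Ω = (εSF)∘(FΩF)∘(FCη) and Λ_Φ = (εVF)∘(FΦF)∘(FCη). Then the Galois map sends χ^S to χ^V: for every object Y of B, Γ^{S,V}_{USY, TY}(χ^S_Y) = χ^V_Y ∘ F(Φ_Y ∘ Ω⁻¹_Y). -/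
/-!
Under the adjunction `F ⊣ U`, the mate `Λ_Ω` corresponds to `C η ≫ Ω F`, so `χ^S_Y` corresponds
to `Ω⁻¹_Y ≫ C η_{UY} ≫ Ω_{FUY}`. The Galois map postcomposes this adjunct with `Ω⁻¹ ≫ Φ`, which
cancels `Ω_{FUY}` and leaves `Ω⁻¹_Y ≫ C η_{UY} ≫ Φ_{FUY} = (Ω⁻¹_Y ≫ Φ_Y) ≫ Φ⁻¹_Y ≫ C η_{UY} ≫ Φ_{FUY}`,
the adjunct of `F(Ω⁻¹_Y ≫ Φ_Y) ≫ χ^V_Y`.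
-/

open CategoryTheory

namespace Stmt7

variable {A B : Type*} [Category A] [Category B]

/-- The mate `Λ : F∘C ⟶ S∘F` of a natural isomorphism `Ω : C∘U ≅ U∘S`. -/
def mate (F : A ⥤ B) (U : B ⥤ A) (adj : F ⊣ U) (S : B ⥤ B) (C : A ⥤ A)
    (Ω : U ⋙ C ≅ S ⋙ U) (X : A) : F.obj (C.obj X) ⟶ S.obj (F.obj X) :=
  F.map (C.map (adj.unit.app X)) ≫ F.map (Ω.hom.app (F.obj X)) ≫
    adj.counit.app (S.obj (F.obj X))

/-- `χ := (ΛU) ∘ (FΩ⁻¹) : T∘S ⟶ S∘T`, componentwise. -/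
def chi (F : A ⥤ B) (U : B ⥤ A) (adj : F ⊣ U) (S : B ⥤ B) (C : A ⥤ A)
    (Ω : U ⋙ C ≅ S ⋙ U) (Y : B) :
    F.obj (U.obj (S.obj Y)) ⟶ S.obj (F.obj (U.obj Y)) :=
  F.map (Ω.inv.app Y) ≫ mate F U adj S C Ω (U.obj Y)

/-- The Galois map `Γ^{S,V}_{X,Y}`. -/
def galois (F : A ⥤ B) (U : B ⥤ A) (adj : F ⊣ U) (S V : B ⥤ B) (C : A ⥤ A)
    (Ω : U ⋙ C ≅ S ⋙ U) (Φ : U ⋙ C ≅ V ⋙ U) (X : A) (Y : B)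
    (f : F.obj X ⟶ S.obj Y) : F.obj X ⟶ V.obj Y :=
  F.map (adj.unit.app X) ≫ F.map (U.map f) ≫
    F.map (Ω.inv.app Y ≫ Φ.hom.app Y) ≫ adj.counit.app (V.obj Y)

section

variable (F : A ⥤ B) (U : B ⥤ A) (adj : F ⊣ U) (C : A ⥤ A)

theorem homEquiv_mate (S : B ⥤ B) (Ω : U ⋙ C ≅ S ⋙ U) (X : A) :
    adj.homEquiv _ _ (mate F U adj S C Ω X) = C.map (adj.unit.app X) ≫ Ω.hom.app (F.obj X) := by
  simp [mate, Adjunction.homEquiv_unit]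

theorem homEquiv_chi (S : B ⥤ B) (Ω : U ⋙ C ≅ S ⋙ U) (Y : B) :
    adj.homEquiv _ _ (chi F U adj S C Ω Y)
      = Ω.inv.app Y ≫ C.map (adj.unit.app (U.obj Y)) ≫ Ω.hom.app (F.obj (U.obj Y)) := by
  rw [chi, adj.homEquiv_naturality_left]
  exact Ω.inv.app Y ≫= homEquiv_mate F U adj C S Ω (U.obj Y)

theorem galois_eq_homEquiv_symm (S V : B ⥤ B) (Ω : U ⋙ C ≅ S ⋙ U) (Φ : U ⋙ C ≅ V ⋙ U)
    (X : A) (Y : B) (f : F.obj X ⟶ S.obj Y) :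
    galois F U adj S V C Ω Φ X Y f
      = (adj.homEquiv _ _).symm (adj.homEquiv _ _ f ≫ Ω.inv.app Y ≫ Φ.hom.app Y) := by
  simp [galois, Adjunction.homEquiv_unit, Adjunction.homEquiv_counit]

end

/-- The Galois map sends `χ^S` to `χ^V`. -/
theorem galois_chi
    (F : A ⥤ B) (U : B ⥤ A) (adj : F ⊣ U) (S V : B ⥤ B) (C : A ⥤ A)
    (Ω : U ⋙ C ≅ S ⋙ U) (Φ : U ⋙ C ≅ V ⋙ U) (Y : B) :
    galois F U adj S V C Ω Φ (U.obj (S.obj Y)) (F.obj (U.obj Y))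
        (chi F U adj S C Ω Y)
      = F.map (Ω.inv.app Y ≫ Φ.hom.app Y) ≫ chi F U adj V C Φ Y := by
  rw [galois_eq_homEquiv_symm, Equiv.symm_apply_eq, adj.homEquiv_naturality_left]
  simp [homEquiv_chi]

end Stmt7
end

section
/- If F is V-Galois (i.e. the natural transformation Γ^{T,V} := (εV)∘(FΦ)∘(FηU) : T → V is an isomorphism), then the natural transformation β := (Bμ)∘(θB)∘(BηB) : B∘B → B∘B is an isomorphism, where θ : B∘B → B∘B is the lax morphism of monads arising from the lift V of B. -/
/-!
STATEMENT 8: Let `V` be a lift of the monad functor `B = UF` itself through the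
adjunction `F ⊣ U`, via `Φ : B∘U ≅ U∘V`, and let `θ := (Φ⁻¹F)∘(UΛ_Φ) : B∘B → B∘B`
be the resulting lax morphism of monads.  If `F` is `V`-Galois, i.e. the natural
transformation `Γ^{T,V} := (εV)∘(FΦ)∘(FηU) : T → V` is an isomorphism, then
`β := (Bμ)∘(θB)∘(BηB) : B∘B → B∘B` is an isomorphism.
-/

open CategoryTheory

namespace Stmt8

variable {A B : Type*} [Category A] [Category B]

/-- The mate `Λ_Φ := (εVF)∘(FΦF)∘(FBη) : F∘B ⟶ V∘F` of `Φ`, componentwise. -/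
def mateB (F : A ⥤ B) (U : B ⥤ A) (adj : F ⊣ U) (V : B ⥤ B)
    (Φ : U ⋙ F ⋙ U ≅ V ⋙ U) (X : A) :
    F.obj (U.obj (F.obj X)) ⟶ V.obj (F.obj X) :=
  F.map (U.map (F.map (adj.unit.app X))) ≫ F.map (Φ.hom.app (F.obj X)) ≫
    adj.counit.app (V.obj (F.obj X))

/-- `θ := (Φ⁻¹F)∘(UΛ_Φ) : B∘B ⟶ B∘B`, componentwise. -/
def thetaB (F : A ⥤ B) (U : B ⥤ A) (adj : F ⊣ U) (V : B ⥤ B)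
    (Φ : U ⋙ F ⋙ U ≅ V ⋙ U) (X : A) :
    U.obj (F.obj (U.obj (F.obj X))) ⟶ U.obj (F.obj (U.obj (F.obj X))) :=
  U.map (mateB F U adj V Φ X) ≫ Φ.inv.app (F.obj X)

/-- The Galois natural transformation `Γ^{T,V} := (εV)∘(FΦ)∘(FηU) : T ⟶ V`. -/
def GammaTV (F : A ⥤ B) (U : B ⥤ A) (adj : F ⊣ U) (V : B ⥤ B)
    (Φ : U ⋙ F ⋙ U ≅ V ⋙ U) (Y : B) : F.obj (U.obj Y) ⟶ V.obj Y :=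
  F.map (adj.unit.app (U.obj Y)) ≫ F.map (Φ.hom.app Y) ≫
    adj.counit.app (V.obj Y)

/-- `β := (Bμ)∘(θB)∘(BηB) : B∘B ⟶ B∘B`, componentwise. -/
def beta (F : A ⥤ B) (U : B ⥤ A) (adj : F ⊣ U) (V : B ⥤ B)
    (Φ : U ⋙ F ⋙ U ≅ V ⋙ U) (X : A) :
    U.obj (F.obj (U.obj (F.obj X))) ⟶ U.obj (F.obj (U.obj (F.obj X))) :=
  U.map (F.map (adj.unit.app (U.obj (F.obj X)))) ≫
    thetaB F U adj V Φ (U.obj (F.obj X)) ≫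
    U.map (F.map (U.map (adj.counit.app (F.obj X))))

section

variable (F : A ⥤ B) (U : B ⥤ A) (adj : F ⊣ U) (V : B ⥤ B) (Φ : U ⋙ F ⋙ U ≅ V ⋙ U)

/-- After moving `Vε` past `ε` and `Φ` by naturality, the triangle identity `Uε ∘ ηU = 1` cancels
the first factor of `Λ_Φ`. -/
lemma mateB_comp_map_counit (Y : B) :
    mateB F U adj V Φ (U.obj Y) ≫ V.map (adj.counit.app Y) =
      F.map (Φ.hom.app Y) ≫ adj.counit.app (V.obj Y) := by
  have hε : adj.counit.app (V.obj (F.obj (U.obj Y))) ≫ V.map (adj.counit.app Y) =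
      F.map (U.map (V.map (adj.counit.app Y))) ≫ adj.counit.app (V.obj Y) :=
    (adj.counit.naturality (V.map (adj.counit.app Y))).symm
  have hΦ : Φ.hom.app (F.obj (U.obj Y)) ≫ U.map (V.map (adj.counit.app Y)) =
      U.map (F.map (U.map (adj.counit.app Y))) ≫ Φ.hom.app Y :=
    (Φ.hom.naturality (adj.counit.app Y)).symm
  rw [mateB, Category.assoc, Category.assoc, hε, ← F.map_comp_assoc (Φ.hom.app _), hΦ,
    F.map_comp_assoc, ← F.map_comp_assoc (U.map _), ← U.map_comp, ← F.map_comp,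
    adj.right_triangle_components, F.map_id, U.map_id, F.map_id, Category.id_comp]

lemma beta_eq_map_GammaTV_comp (X : A) :
    beta F U adj V Φ X = U.map (GammaTV F U adj V Φ (F.obj X)) ≫ Φ.inv.app (F.obj X) := by
  have hΦinv : Φ.inv.app (F.obj (U.obj (F.obj X))) ≫
      U.map (F.map (U.map (adj.counit.app (F.obj X)))) =
      U.map (V.map (adj.counit.app (F.obj X))) ≫ Φ.inv.app (F.obj X) :=
    (Φ.inv.naturality (adj.counit.app (F.obj X))).symm
  rw [beta, thetaB, GammaTV, Category.assoc, hΦinv, ← mateB_comp_map_counit]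
  simp only [Functor.map_comp, Category.assoc]

end

/-- If `F` is `V`-Galois then `β` is an isomorphism. -/
theorem beta_isIso_of_V_Galois
    (F : A ⥤ B) (U : B ⥤ A) (adj : F ⊣ U) (V : B ⥤ B)
    (Φ : U ⋙ F ⋙ U ≅ V ⋙ U)
    (hGalois : ∀ Y : B, IsIso (GammaTV F U adj V Φ Y)) :
    ∀ X : A, IsIso (beta F U adj V Φ X) := by
  intro X
  have := hGalois (F.obj X)
  rw [beta_eq_map_GammaTV_comp]
  infer_instance

end Stmt8
end

section
/- For a functor M : X → B, the assignment ρ ↦ (Ω⁻¹M)∘(Uρ)∘(ηUM) is a bijection between right χ-coalgebra structures ρ : TM → SM on M and ℂ-coalgebra structures ∇ : UM → CUM on the functor UM : X → A (i.e. natural transformations ∇ with (Δ^C UM)∘∇ = (C∇)∘∇ and (ε^C UM)∘∇ = id). -/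
/-!
Transposing along `F ⊣ U` and then composing with `Ω⁻¹` is a bijection between maps
`FUm ⟶ Sm` and maps `Um ⟶ CUm`, natural in `m`. Since the transpose of `ε` is the identity and
`Ω` respects counits, the counit axiom of `ρ` transposes to that of `∇`. Since the transpose of
`χ` is `(ΩFU)∘(CηU)∘Ω⁻¹`, the transpose of the `χ`-coassociativity of `ρ` is the
coassociativity of `∇` followed by the isomorphism `(ΩS)∘(CΩ)`.
-/

open CategoryTheory

namespace Stmt9

variable {A B X : Type*} [Category A] [Category B] [Category X]

/-- The mate `Λ : F∘C ⟶ S∘F` of `Ω`, componentwise. -/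
def mate (F : A ⥤ B) (U : B ⥤ A) (adj : F ⊣ U) (S : B ⥤ B) (C : A ⥤ A)
    (Ω : U ⋙ C ≅ S ⋙ U) (X' : A) : F.obj (C.obj X') ⟶ S.obj (F.obj X') :=
  F.map (C.map (adj.unit.app X')) ≫ F.map (Ω.hom.app (F.obj X')) ≫
    adj.counit.app (S.obj (F.obj X'))

/-- `χ := (ΛU) ∘ (FΩ⁻¹) : T∘S ⟶ S∘T`, componentwise. -/
def chi (F : A ⥤ B) (U : B ⥤ A) (adj : F ⊣ U) (S : B ⥤ B) (C : A ⥤ A)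
    (Ω : U ⋙ C ≅ S ⋙ U) (Y : B) :
    F.obj (U.obj (S.obj Y)) ⟶ S.obj (F.obj (U.obj Y)) :=
  F.map (Ω.inv.app Y) ≫ mate F U adj S C Ω (U.obj Y)

section

variable (F : A ⥤ B) (U : B ⥤ A) (adj : F ⊣ U)
  (SS : Comonad B) (CC : Comonad A)
  (Ω : U ⋙ CC.toFunctor ≅ SS.toFunctor ⋙ U) (M : X ⥤ B)

/-- Right `χ`-coalgebra conditions for `ρ : TM ⟶ SM`. -/
def IsRightChiCoalgebra (ρ : (M ⋙ U ⋙ F : X ⥤ B) ⟶ (M ⋙ SS.toFunctor : X ⥤ B)) :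
    Prop :=
  (∀ x : X,
    ρ.app x ≫ SS.δ.app (M.obj x)
    = F.map (adj.unit.app (U.obj (M.obj x))) ≫ F.map (U.map (ρ.app x)) ≫
        chi F U adj SS.toFunctor CC.toFunctor Ω (M.obj x) ≫ SS.map (ρ.app x)) ∧
  (∀ x : X, ρ.app x ≫ SS.ε.app (M.obj x) = adj.counit.app (M.obj x))

/-- `ℂ`-coalgebra conditions for `∇ : UM ⟶ CUM`. -/
def IsCCoalgebra (nab : (M ⋙ U : X ⥤ A) ⟶ (M ⋙ U ⋙ CC.toFunctor : X ⥤ A)) : Prop :=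
  (∀ x : X, nab.app x ≫ CC.δ.app (U.obj (M.obj x))
      = nab.app x ≫ CC.map (nab.app x)) ∧
  (∀ x : X, nab.app x ≫ CC.ε.app (U.obj (M.obj x)) = 𝟙 (U.obj (M.obj x)))

end

variable {F : A ⥤ B} {U : B ⥤ A} (adj : F ⊣ U)

section Transpose

variable {S : B ⥤ B} {C : A ⥤ A} (Ω : U ⋙ C ≅ S ⋙ U)

lemma homEquiv_mate (a : A) :
    adj.homEquiv _ _ (mate F U adj S C Ω a) = C.map (adj.unit.app a) ≫ Ω.hom.app (F.obj a) := by
  simp [mate, Adjunction.homEquiv_unit]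

lemma homEquiv_chi (Y : B) :
    adj.homEquiv _ _ (chi F U adj S C Ω Y)
      = Ω.inv.app Y ≫ C.map (adj.unit.app (U.obj Y)) ≫ Ω.hom.app (F.obj (U.obj Y)) := by
  rw [chi, Adjunction.homEquiv_naturality_left]
  exact congrArg _ (homEquiv_mate adj Ω _)

def coactionEquiv (m : B) : (F.obj (U.obj m) ⟶ S.obj m) ≃ (U.obj m ⟶ C.obj (U.obj m)) where
  toFun r := adj.unit.app _ ≫ U.map r ≫ Ω.inv.app m
  invFun g := F.map (g ≫ Ω.hom.app m) ≫ adj.counit.app (S.obj m)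
  left_inv r := by simp
  right_inv g := by simp

lemma coactionEquiv_naturality_iff {m m' : B} (f : m ⟶ m') (r : F.obj (U.obj m) ⟶ S.obj m)
    (r' : F.obj (U.obj m') ⟶ S.obj m') :
    U.map f ≫ coactionEquiv adj Ω m' r' = coactionEquiv adj Ω m r ≫ C.map (U.map f) ↔
      F.map (U.map f) ≫ r' = r ≫ S.map f := by
  rw [← adj.homEquiv_naturality_left_square_iff, ← cancel_mono (Ω.inv.app m')]
  have := Ω.inv.naturality f
  dsimp at this
  simp [coactionEquiv, Adjunction.homEquiv_unit, this]

def coactionNatEquiv (M : X ⥤ B) : (M ⋙ U ⋙ F ⟶ M ⋙ S) ≃ (M ⋙ U ⟶ M ⋙ U ⋙ C) where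
  toFun ρ :=
    { app x := coactionEquiv adj Ω (M.obj x) (ρ.app x)
      naturality _ _ f := (coactionEquiv_naturality_iff adj Ω (M.map f) _ _).2 (ρ.naturality f) }
  invFun ν :=
    { app x := (coactionEquiv adj Ω (M.obj x)).symm (ν.app x)
      naturality _ _ f := (coactionEquiv_naturality_iff adj Ω (M.map f) _ _).1 (by
        rw [Equiv.apply_symm_apply, Equiv.apply_symm_apply]
        exact ν.naturality f) }
  left_inv ρ := by ext; simp
  right_inv ν := by ext; simp

end Transpose

section Coalgebra

variable (SS : Comonad B) (CC : Comonad A) (Ω : U ⋙ CC.toFunctor ≅ SS.toFunctor ⋙ U)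

lemma coactionEquiv_comp_counit_iff
    (hΩε : ∀ Y : B, Ω.hom.app Y ≫ U.map (SS.ε.app Y) = CC.ε.app (U.obj Y))
    (m : B) (r : F.obj (U.obj m) ⟶ SS.obj m) :
    coactionEquiv adj Ω m r ≫ CC.ε.app (U.obj m) = 𝟙 _ ↔ r ≫ SS.ε.app m = adj.counit.app m := by
  have : coactionEquiv adj Ω m r ≫ CC.ε.app (U.obj m)
      = adj.homEquiv (U.obj m) m (r ≫ SS.ε.app m) := by
    simp [coactionEquiv, ← hΩε, Adjunction.homEquiv_unit]
  rw [this, adj.homEquiv_apply_eq, adj.homEquiv_symm_id]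

lemma coactionEquiv_coassoc_iff
    (hΩδ : ∀ Y : B, Ω.hom.app Y ≫ U.map (SS.δ.app Y)
      = CC.δ.app (U.obj Y) ≫ CC.map (Ω.hom.app Y) ≫ Ω.hom.app (SS.obj Y))
    (m : B) (r : F.obj (U.obj m) ⟶ SS.obj m) :
    coactionEquiv adj Ω m r ≫ CC.δ.app (U.obj m)
        = coactionEquiv adj Ω m r ≫ CC.map (coactionEquiv adj Ω m r) ↔
      r ≫ SS.δ.app m = F.map (adj.unit.app (U.obj m)) ≫ F.map (U.map r) ≫
        chi F U adj SS.toFunctor CC.toFunctor Ω m ≫ SS.map r := by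
  set ν := coactionEquiv adj Ω m r
  have hδ : adj.homEquiv (U.obj m) (SS.obj (SS.obj m)) (r ≫ SS.δ.app m)
      = ν ≫ CC.δ.app (U.obj m) ≫ CC.map (Ω.hom.app m) ≫ Ω.hom.app (SS.obj m) := by
    simp [ν, coactionEquiv, Adjunction.homEquiv_unit, ← hΩδ]
  have hχ : adj.homEquiv (U.obj m) (SS.obj (SS.obj m))
        (F.map (adj.unit.app (U.obj m)) ≫ F.map (U.map r) ≫
          chi F U adj SS.toFunctor CC.toFunctor Ω m ≫ SS.map r)
      = ν ≫ CC.map ν ≫ CC.map (Ω.hom.app m) ≫ Ω.hom.app (SS.obj m) := by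
    rw [adj.homEquiv_naturality_left, adj.homEquiv_naturality_left,
      adj.homEquiv_naturality_right, homEquiv_chi]
    have hΩr := Ω.hom.naturality r
    dsimp at hΩr
    simp only [ν, coactionEquiv, Equiv.coe_fn_mk, Functor.map_comp, Category.assoc, ← hΩr]
    rw [← CC.map_comp_assoc (Ω.inv.app m), Iso.inv_hom_id_app, CC.map_id, Category.id_comp]
  rw [← cancel_mono (CC.map (Ω.hom.app m) ≫ Ω.hom.app (SS.obj m)),
    ← (adj.homEquiv (U.obj m) (SS.obj (SS.obj m))).apply_eq_iff_eq, hδ, hχ]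
  simp only [Category.assoc]

end Coalgebra

/-- The assignment `ρ ↦ (Ω⁻¹M)∘(Uρ)∘(ηUM)` is a bijection between right
`χ`-coalgebra structures on `M` and `ℂ`-coalgebra structures on `UM`. -/
theorem rightChiCoalgebra_equiv_CCoalgebra
    (F : A ⥤ B) (U : B ⥤ A) (adj : F ⊣ U)
    (SS : Comonad B) (CC : Comonad A)
    (Ω : U ⋙ CC.toFunctor ≅ SS.toFunctor ⋙ U)
    -- `Ω` is a lax morphism of comonads
    (hΩδ : ∀ Y : B,
      Ω.hom.app Y ≫ U.map (SS.δ.app Y)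
      = CC.δ.app (U.obj Y) ≫ CC.map (Ω.hom.app Y) ≫ Ω.hom.app (SS.obj Y))
    (hΩε : ∀ Y : B, Ω.hom.app Y ≫ U.map (SS.ε.app Y) = CC.ε.app (U.obj Y))
    (M : X ⥤ B) :
    -- (1) the assignment is well defined: for each right `χ`-coalgebra structure `ρ`,
    -- the family `(Ω⁻¹M)∘(Uρ)∘(ηUM)` is natural and a `ℂ`-coalgebra structure on `UM`;
    (∀ ρ : (M ⋙ U ⋙ F : X ⥤ B) ⟶ (M ⋙ SS.toFunctor : X ⥤ B),
      IsRightChiCoalgebra F U adj SS CC Ω M ρ →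
      (∀ (x y : X) (f : x ⟶ y),
        U.map (M.map f) ≫
          (adj.unit.app (U.obj (M.obj y)) ≫ U.map (ρ.app y) ≫ Ω.inv.app (M.obj y))
        = (adj.unit.app (U.obj (M.obj x)) ≫ U.map (ρ.app x) ≫ Ω.inv.app (M.obj x)) ≫
            CC.map (U.map (M.map f))) ∧
      (∀ x : X,
        (adj.unit.app (U.obj (M.obj x)) ≫ U.map (ρ.app x) ≫ Ω.inv.app (M.obj x)) ≫
            CC.δ.app (U.obj (M.obj x))
        = (adj.unit.app (U.obj (M.obj x)) ≫ U.map (ρ.app x) ≫ Ω.inv.app (M.obj x)) ≫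
            CC.map (adj.unit.app (U.obj (M.obj x)) ≫ U.map (ρ.app x) ≫
              Ω.inv.app (M.obj x))) ∧
      (∀ x : X,
        (adj.unit.app (U.obj (M.obj x)) ≫ U.map (ρ.app x) ≫ Ω.inv.app (M.obj x)) ≫
            CC.ε.app (U.obj (M.obj x))
        = 𝟙 (U.obj (M.obj x)))) ∧
    -- (2) the assignment is bijective: every `ℂ`-coalgebra structure on `UM` arises
    -- from a unique right `χ`-coalgebra structure on `M`.
    (∀ nab : (M ⋙ U : X ⥤ A) ⟶ (M ⋙ U ⋙ CC.toFunctor : X ⥤ A),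
      IsCCoalgebra U CC M nab →
      ∃! ρ : (M ⋙ U ⋙ F : X ⥤ B) ⟶ (M ⋙ SS.toFunctor : X ⥤ B),
        IsRightChiCoalgebra F U adj SS CC Ω M ρ ∧
        ∀ x : X,
          nab.app x
          = adj.unit.app (U.obj (M.obj x)) ≫ U.map (ρ.app x) ≫ Ω.inv.app (M.obj x)) := by
  set e := coactionNatEquiv adj Ω M
  refine ⟨fun ρ hρ => ⟨fun _ _ f => (e ρ).naturality f,
      fun x => (coactionEquiv_coassoc_iff adj SS CC Ω hΩδ _ _).2 (hρ.1 x),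
      fun x => (coactionEquiv_comp_counit_iff adj SS CC Ω hΩε _ _).2 (hρ.2 x)⟩,
    fun nab hnab => ?_⟩
  obtain ⟨ρ, rfl⟩ := e.surjective nab
  refine ⟨ρ, ⟨⟨fun x => (coactionEquiv_coassoc_iff adj SS CC Ω hΩδ _ _).1 (hnab.1 x),
      fun x => (coactionEquiv_comp_counit_iff adj SS CC Ω hΩε _ _).1 (hnab.2 x)⟩, fun _ => rfl⟩,
    fun ρ' hρ' => e.injective ?_⟩
  ext x
  exact (hρ'.2 x).symm

end Stmt9
end

section
/- Let S and V be two lifts (via Ω and Φ respectively) of a comonad ℂ through the adjunction, with associated comonad distributive laws χ^S : TS → ST and χ^V : TV → VT from Theorem 2.7. Then for any functor M : X → B, the Galois map ρ ↦ Γ^{S,V}(ρ), applied componentwise as ρ_x ↦ (εVM x)∘F(Φ_{Mx}∘Ω⁻¹_{Mx})∘(FUρ_x)∘(FηUMx), is a bijection between right χ^S-coalgebra structures TM → SM on M and right χ^V-coalgebra structures TM → VM on M. -/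
/-!
STATEMENT 10: Let `S` and `V` be two lifts (via `Ω` and `Φ`) of a comonad `ℂ` through
an adjunction `F ⊣ U`, with associated comonad distributive laws `χ^S : TS → ST` and
`χ^V : TV → VT`.  For any functor `M : X → B`, the Galois map `ρ ↦ Γ^{S,V}(ρ)`
(applied componentwise) is a bijection between right `χ^S`-coalgebra structures
`TM → SM` and right `χ^V`-coalgebra structures `TM → VM` on `M`.
-/

open CategoryTheory

namespace Stmt10

variable {A B X : Type*} [Category A] [Category B] [Category X]

/-- The mate `Λ : F∘C ⟶ S∘F` of `Ω`, componentwise. -/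
def mate (F : A ⥤ B) (U : B ⥤ A) (adj : F ⊣ U) (S : B ⥤ B) (C : A ⥤ A)
    (Ω : U ⋙ C ≅ S ⋙ U) (X' : A) : F.obj (C.obj X') ⟶ S.obj (F.obj X') :=
  F.map (C.map (adj.unit.app X')) ≫ F.map (Ω.hom.app (F.obj X')) ≫
    adj.counit.app (S.obj (F.obj X'))

/-- `χ := (ΛU) ∘ (FΩ⁻¹) : T∘S ⟶ S∘T`, componentwise. -/
def chi (F : A ⥤ B) (U : B ⥤ A) (adj : F ⊣ U) (S : B ⥤ B) (C : A ⥤ A)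
    (Ω : U ⋙ C ≅ S ⋙ U) (Y : B) :
    F.obj (U.obj (S.obj Y)) ⟶ S.obj (F.obj (U.obj Y)) :=
  F.map (Ω.inv.app Y) ≫ mate F U adj S C Ω (U.obj Y)

/-- The Galois map `Γ^{S,V}_{X,Y}` applied to `f : FX ⟶ SY`. -/
def galois (F : A ⥤ B) (U : B ⥤ A) (adj : F ⊣ U) (S V : B ⥤ B) (C : A ⥤ A)
    (Ω : U ⋙ C ≅ S ⋙ U) (Φ : U ⋙ C ≅ V ⋙ U) (X' : A) (Y : B)
    (f : F.obj X' ⟶ S.obj Y) : F.obj X' ⟶ V.obj Y :=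
  F.map (adj.unit.app X') ≫ F.map (U.map f) ≫
    F.map (Ω.inv.app Y ≫ Φ.hom.app Y) ≫ adj.counit.app (V.obj Y)

section

variable (F : A ⥤ B) (U : B ⥤ A) (adj : F ⊣ U) (SS : Comonad B) (CC : Comonad A)
  (Ω : U ⋙ CC.toFunctor ≅ SS.toFunctor ⋙ U) (M : X ⥤ B)

/-- Right coalgebra conditions over the distributive law determined by a lift. -/
def IsRightCoalgebra (ρ : (M ⋙ U ⋙ F : X ⥤ B) ⟶ (M ⋙ SS.toFunctor : X ⥤ B)) :
    Prop :=
  (∀ x : X,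
    ρ.app x ≫ SS.δ.app (M.obj x)
    = F.map (adj.unit.app (U.obj (M.obj x))) ≫ F.map (U.map (ρ.app x)) ≫
        chi F U adj SS.toFunctor CC.toFunctor Ω (M.obj x) ≫ SS.map (ρ.app x)) ∧
  (∀ x : X, ρ.app x ≫ SS.ε.app (M.obj x) = adj.counit.app (M.obj x))

end

/- Transposing along `F ⊣ U` and then along `Ω` identifies maps `F (U Y) ⟶ S Y`
with maps `U Y ⟶ C (U Y)`, and under this identification the right `χ^S`-coalgebra axioms
become exactly the axioms of a `ℂ`-coalgebra structure on `U Y`.  The Galois map `Γ^{S,V}` is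
the transpose along `Ω` followed by the inverse transpose along `Φ`, so it matches the two kinds
of coalgebra structures bijectively, with inverse `Γ^{V,S}`. -/

section Transpose

variable {F : A ⥤ B} {U : B ⥤ A} (adj : F ⊣ U) {S V : B ⥤ B} {C : A ⥤ A}
  (Ω : U ⋙ C ≅ S ⋙ U) (Φ : U ⋙ C ≅ V ⋙ U)

def liftHomEquiv (X' : A) (Y : B) : (F.obj X' ⟶ S.obj Y) ≃ (X' ⟶ C.obj (U.obj Y)) where
  toFun f := adj.homEquiv X' (S.obj Y) f ≫ Ω.inv.app Y
  invFun g := (adj.homEquiv X' (S.obj Y)).symm (g ≫ Ω.hom.app Y)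
  left_inv f := by simp
  right_inv g := by simp

@[simp]
lemma liftHomEquiv_apply {X' : A} {Y : B} (f : F.obj X' ⟶ S.obj Y) :
    liftHomEquiv adj Ω X' Y f = adj.unit.app X' ≫ U.map f ≫ Ω.inv.app Y := by
  simp [liftHomEquiv, Adjunction.homEquiv_unit]

@[simp]
lemma liftHomEquiv_symm_apply {X' : A} {Y : B} (g : X' ⟶ C.obj (U.obj Y)) :
    (liftHomEquiv adj Ω X' Y).symm g = F.map (g ≫ Ω.hom.app Y) ≫ adj.counit.app (S.obj Y) := by
  simp [liftHomEquiv, Adjunction.homEquiv_counit]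

lemma liftHomEquiv_naturality_left {X'' X' : A} {Y : B} (g : X'' ⟶ X')
    (f : F.obj X' ⟶ S.obj Y) :
    liftHomEquiv adj Ω X'' Y (F.map g ≫ f) = g ≫ liftHomEquiv adj Ω X' Y f := by
  simp [liftHomEquiv, adj.homEquiv_naturality_left]

lemma liftHomEquiv_naturality_right {X' : A} {Y Y' : B} (f : F.obj X' ⟶ S.obj Y)
    (h : Y ⟶ Y') :
    liftHomEquiv adj Ω X' Y' (f ≫ S.map h) = liftHomEquiv adj Ω X' Y f ≫ C.map (U.map h) := by
  simp only [liftHomEquiv, Equiv.coe_fn_mk, adj.homEquiv_naturality_right, Category.assoc]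
  exact congrArg _ (Ω.inv.naturality h)

lemma galois_eq_liftHomEquiv_symm {X' : A} {Y : B} (f : F.obj X' ⟶ S.obj Y) :
    galois F U adj S V C Ω Φ X' Y f
      = (liftHomEquiv adj Φ X' Y).symm (liftHomEquiv adj Ω X' Y f) := by
  simp [galois]

@[simp]
lemma liftHomEquiv_galois {X' : A} {Y : B} (f : F.obj X' ⟶ S.obj Y) :
    liftHomEquiv adj Φ X' Y (galois F U adj S V C Ω Φ X' Y f) = liftHomEquiv adj Ω X' Y f := by
  rw [galois_eq_liftHomEquiv_symm, Equiv.apply_symm_apply]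

lemma galois_galois {X' : A} {Y : B} (f : F.obj X' ⟶ S.obj Y) :
    galois F U adj V S C Φ Ω X' Y (galois F U adj S V C Ω Φ X' Y f) = f := by
  rw [galois_eq_liftHomEquiv_symm, liftHomEquiv_galois, Equiv.symm_apply_apply]

lemma galois_naturality {X₁ X₂ : A} {Y₁ Y₂ : B} {g : X₁ ⟶ X₂} {h : Y₁ ⟶ Y₂}
    {f₁ : F.obj X₁ ⟶ S.obj Y₁} {f₂ : F.obj X₂ ⟶ S.obj Y₂} (w : F.map g ≫ f₂ = f₁ ≫ S.map h) :
    F.map g ≫ galois F U adj S V C Ω Φ X₂ Y₂ f₂ = galois F U adj S V C Ω Φ X₁ Y₁ f₁ ≫ V.map h := by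
  apply (liftHomEquiv adj Φ X₁ Y₂).injective
  rw [liftHomEquiv_naturality_left, liftHomEquiv_naturality_right, liftHomEquiv_galois,
    liftHomEquiv_galois, ← liftHomEquiv_naturality_left, w, liftHomEquiv_naturality_right]

@[simps]
def galoisNatTrans (M : X ⥤ B) (ρ : M ⋙ U ⋙ F ⟶ M ⋙ S) : M ⋙ U ⋙ F ⟶ M ⋙ V where
  app x := galois F U adj S V C Ω Φ (U.obj (M.obj x)) (M.obj x) (ρ.app x)
  naturality _ _ f := galois_naturality adj Ω Φ (ρ.naturality f)

lemma galoisNatTrans_galoisNatTrans (M : X ⥤ B) (ρ : M ⋙ U ⋙ F ⟶ M ⋙ S) :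
    galoisNatTrans adj Φ Ω M (galoisNatTrans adj Ω Φ M ρ) = ρ := by
  ext x
  exact galois_galois adj Ω Φ (ρ.app x)

end Transpose

section Coalgebra

variable {F : A ⥤ B} {U : B ⥤ A} (adj : F ⊣ U) {S : Comonad B} {C : Comonad A}
  (Ω : U ⋙ C.toFunctor ≅ S.toFunctor ⋙ U)

lemma liftHomEquiv_comp_δ
    (hΩδ : ∀ Y : B, Ω.hom.app Y ≫ U.map (S.δ.app Y)
      = C.δ.app (U.obj Y) ≫ C.map (Ω.hom.app Y) ≫ Ω.hom.app (S.obj Y))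
    {X' : A} {Y : B} (f : F.obj X' ⟶ S.obj Y) :
    liftHomEquiv adj Ω X' (S.obj Y) (f ≫ S.δ.app Y)
      = liftHomEquiv adj Ω X' Y f ≫ C.δ.app (U.obj Y) ≫ C.map (Ω.hom.app Y) := by
  have hΩinvδ : U.map (S.δ.app Y) ≫ Ω.inv.app (S.obj Y)
      = Ω.inv.app Y ≫ C.δ.app (U.obj Y) ≫ C.map (Ω.hom.app Y) := by
    rw [← cancel_epi (Ω.hom.app Y), reassoc_of% hΩδ Y]
    simp
  simp [hΩinvδ]

lemma liftHomEquiv_chi (Y : B) :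
    liftHomEquiv adj Ω (U.obj (S.obj Y)) (F.obj (U.obj Y))
        (chi F U adj S.toFunctor C.toFunctor Ω Y)
      = Ω.inv.app Y ≫ C.map (adj.unit.app (U.obj Y)) := by
  simp [chi, mate]

lemma liftHomEquiv_unit_comp_chi {Y : B} (r : F.obj (U.obj Y) ⟶ S.obj Y) :
    liftHomEquiv adj Ω (U.obj Y) (S.obj Y)
        (F.map (adj.unit.app (U.obj Y)) ≫ F.map (U.map r) ≫
          chi F U adj S.toFunctor C.toFunctor Ω Y ≫ S.map r)
      = liftHomEquiv adj Ω (U.obj Y) Y r ≫ C.map (liftHomEquiv adj Ω (U.obj Y) Y r)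
          ≫ C.map (Ω.hom.app Y) := by
  rw [← Category.assoc, ← Category.assoc, liftHomEquiv_naturality_right, Category.assoc,
    liftHomEquiv_naturality_left, liftHomEquiv_naturality_left, liftHomEquiv_chi]
  simp only [liftHomEquiv_apply, Category.assoc, ← Functor.map_comp, Iso.inv_hom_id_app,
    Functor.comp_obj, Category.comp_id]

lemma homEquiv_comp_ε
    (hΩε : ∀ Y : B, Ω.hom.app Y ≫ U.map (S.ε.app Y) = C.ε.app (U.obj Y))
    {X' : A} {Y : B} (f : F.obj X' ⟶ S.obj Y) :
    adj.homEquiv X' Y (f ≫ S.ε.app Y) = liftHomEquiv adj Ω X' Y f ≫ C.ε.app (U.obj Y) := by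
  simp [Adjunction.homEquiv_unit, ← hΩε]

lemma comp_δ_eq_iff
    (hΩδ : ∀ Y : B, Ω.hom.app Y ≫ U.map (S.δ.app Y)
      = C.δ.app (U.obj Y) ≫ C.map (Ω.hom.app Y) ≫ Ω.hom.app (S.obj Y))
    {Y : B} (r : F.obj (U.obj Y) ⟶ S.obj Y) :
    r ≫ S.δ.app Y = F.map (adj.unit.app (U.obj Y)) ≫ F.map (U.map r) ≫
        chi F U adj S.toFunctor C.toFunctor Ω Y ≫ S.map r
      ↔ liftHomEquiv adj Ω _ Y r ≫ C.δ.app (U.obj Y)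
        = liftHomEquiv adj Ω _ Y r ≫ C.map (liftHomEquiv adj Ω _ Y r) := by
  rw [← (liftHomEquiv adj Ω _ _).apply_eq_iff_eq, liftHomEquiv_comp_δ adj Ω hΩδ,
    liftHomEquiv_unit_comp_chi]
  simp only [← Category.assoc]
  exact cancel_mono _

lemma comp_ε_eq_counit_iff
    (hΩε : ∀ Y : B, Ω.hom.app Y ≫ U.map (S.ε.app Y) = C.ε.app (U.obj Y))
    {Y : B} (r : F.obj (U.obj Y) ⟶ S.obj Y) :
    r ≫ S.ε.app Y = adj.counit.app Y ↔ liftHomEquiv adj Ω _ Y r ≫ C.ε.app (U.obj Y) = 𝟙 _ := by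
  rw [← (adj.homEquiv (U.obj Y) Y).apply_eq_iff_eq, homEquiv_comp_ε adj Ω hΩε, adj.homEquiv_unit,
    adj.right_triangle_components]

end Coalgebra

section Galois

variable {F : A ⥤ B} {U : B ⥤ A} (adj : F ⊣ U) {S V : Comonad B} {C : Comonad A}
  (Ω : U ⋙ C.toFunctor ≅ S.toFunctor ⋙ U) (Φ : U ⋙ C.toFunctor ≅ V.toFunctor ⋙ U)

lemma isRightCoalgebra_galoisNatTrans_iff
    (hΩδ : ∀ Y : B, Ω.hom.app Y ≫ U.map (S.δ.app Y)
      = C.δ.app (U.obj Y) ≫ C.map (Ω.hom.app Y) ≫ Ω.hom.app (S.obj Y))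
    (hΩε : ∀ Y : B, Ω.hom.app Y ≫ U.map (S.ε.app Y) = C.ε.app (U.obj Y))
    (hΦδ : ∀ Y : B, Φ.hom.app Y ≫ U.map (V.δ.app Y)
      = C.δ.app (U.obj Y) ≫ C.map (Φ.hom.app Y) ≫ Φ.hom.app (V.obj Y))
    (hΦε : ∀ Y : B, Φ.hom.app Y ≫ U.map (V.ε.app Y) = C.ε.app (U.obj Y))
    (M : X ⥤ B) (ρ : M ⋙ U ⋙ F ⟶ M ⋙ S.toFunctor) :
    IsRightCoalgebra F U adj V C Φ M (galoisNatTrans adj Ω Φ M ρ)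
      ↔ IsRightCoalgebra F U adj S C Ω M ρ := by
  simp only [IsRightCoalgebra, galoisNatTrans_app, comp_δ_eq_iff adj Φ hΦδ,
    comp_δ_eq_iff adj Ω hΩδ, comp_ε_eq_counit_iff adj Φ hΦε, comp_ε_eq_counit_iff adj Ω hΩε,
    liftHomEquiv_galois]

end Galois

/-- The componentwise Galois map is a bijection between right `χ^S`-coalgebra
structures and right `χ^V`-coalgebra structures on `M`. -/
theorem galois_bijection_on_coalgebras
    (F : A ⥤ B) (U : B ⥤ A) (adj : F ⊣ U)
    (SS VV : Comonad B) (CC : Comonad A)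
    (Ω : U ⋙ CC.toFunctor ≅ SS.toFunctor ⋙ U)
    (Φ : U ⋙ CC.toFunctor ≅ VV.toFunctor ⋙ U)
    -- `Ω` and `Φ` are lax morphisms of comonads
    (hΩδ : ∀ Y : B,
      Ω.hom.app Y ≫ U.map (SS.δ.app Y)
      = CC.δ.app (U.obj Y) ≫ CC.map (Ω.hom.app Y) ≫ Ω.hom.app (SS.obj Y))
    (hΩε : ∀ Y : B, Ω.hom.app Y ≫ U.map (SS.ε.app Y) = CC.ε.app (U.obj Y))
    (hΦδ : ∀ Y : B,
      Φ.hom.app Y ≫ U.map (VV.δ.app Y)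
      = CC.δ.app (U.obj Y) ≫ CC.map (Φ.hom.app Y) ≫ Φ.hom.app (VV.obj Y))
    (hΦε : ∀ Y : B, Φ.hom.app Y ≫ U.map (VV.ε.app Y) = CC.ε.app (U.obj Y))
    (M : X ⥤ B) :
    -- (1) for each right `χ^S`-coalgebra structure `ρ`, the componentwise Galois image
    -- is natural and a right `χ^V`-coalgebra structure on `M`;
    (∀ ρ : (M ⋙ U ⋙ F : X ⥤ B) ⟶ (M ⋙ SS.toFunctor : X ⥤ B),
      IsRightCoalgebra F U adj SS CC Ω M ρ →
      (∀ (x y : X) (f : x ⟶ y),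
        F.map (U.map (M.map f)) ≫
          galois F U adj SS.toFunctor VV.toFunctor CC.toFunctor Ω Φ
            (U.obj (M.obj y)) (M.obj y) (ρ.app y)
        = galois F U adj SS.toFunctor VV.toFunctor CC.toFunctor Ω Φ
            (U.obj (M.obj x)) (M.obj x) (ρ.app x) ≫ VV.map (M.map f)) ∧
      (∀ x : X,
        galois F U adj SS.toFunctor VV.toFunctor CC.toFunctor Ω Φ
            (U.obj (M.obj x)) (M.obj x) (ρ.app x) ≫ VV.δ.app (M.obj x)
        = F.map (adj.unit.app (U.obj (M.obj x))) ≫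
            F.map (U.map (galois F U adj SS.toFunctor VV.toFunctor CC.toFunctor Ω Φ
              (U.obj (M.obj x)) (M.obj x) (ρ.app x))) ≫
            chi F U adj VV.toFunctor CC.toFunctor Φ (M.obj x) ≫
            VV.map (galois F U adj SS.toFunctor VV.toFunctor CC.toFunctor Ω Φ
              (U.obj (M.obj x)) (M.obj x) (ρ.app x))) ∧
      (∀ x : X,
        galois F U adj SS.toFunctor VV.toFunctor CC.toFunctor Ω Φ
            (U.obj (M.obj x)) (M.obj x) (ρ.app x) ≫ VV.ε.app (M.obj x)
        = adj.counit.app (M.obj x))) ∧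
    -- (2) every right `χ^V`-coalgebra structure arises from a unique right
    -- `χ^S`-coalgebra structure under the componentwise Galois map.
    (∀ ρ' : (M ⋙ U ⋙ F : X ⥤ B) ⟶ (M ⋙ VV.toFunctor : X ⥤ B),
      IsRightCoalgebra F U adj VV CC Φ M ρ' →
      ∃! ρ : (M ⋙ U ⋙ F : X ⥤ B) ⟶ (M ⋙ SS.toFunctor : X ⥤ B),
        IsRightCoalgebra F U adj SS CC Ω M ρ ∧
        ∀ x : X,
          ρ'.app x
          = galois F U adj SS.toFunctor VV.toFunctor CC.toFunctor Ω Φ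
              (U.obj (M.obj x)) (M.obj x) (ρ.app x)) := by
  have hcoalg := isRightCoalgebra_galoisNatTrans_iff adj Ω Φ hΩδ hΩε hΦδ hΦε M
  refine ⟨fun ρ hρ => ⟨fun _ _ f => (galoisNatTrans adj Ω Φ M ρ).naturality f, (hcoalg ρ).2 hρ⟩,
    fun ρ' hρ' => ⟨galoisNatTrans adj Φ Ω M ρ', ⟨?_, fun x => (galois_galois adj Φ Ω _).symm⟩, ?_⟩⟩
  · rwa [← hcoalg, galoisNatTrans_galoisNatTrans]
  · rintro ρ ⟨-, hρ'ρ⟩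
    have : ρ' = galoisNatTrans adj Ω Φ M ρ := NatTrans.ext (funext hρ'ρ)
    rw [this, galoisNatTrans_galoisNatTrans]

end Stmt10
end

section
/- Let ∇ : M → SM be an 𝕊-coalgebra structure on a functor M : X → B. Then the functor UM : X → A, equipped with the 𝔹-algebra structure β := UεM : BUM → UM and the ℂ-coalgebra structure ∇' := (Ω⁻¹M)∘(U∇) : UM → CUM, is an entwined algebra with respect to θ; that is, β satisfies the algebra axioms, ∇' satisfies the coalgebra axioms, and (C β)∘(θ UM)∘(B ∇') = ∇' ∘ β. -/
/-!
The algebra axioms for `β = UεM` are those of the Eilenberg–Moore comparison algebra of `M`.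
The coalgebra axioms for `∇'` come from transporting the `𝕊`-coalgebra `M` along the lax
morphism `Ω`. For the entwining, naturality of `Ω⁻¹` moves `CUε` past `Ω⁻¹F`, so it suffices
to check `(F∇') ≫ Λ_{UM} ≫ Sε_M = ε_M ≫ ∇` in `B`; since `Λ` is the mate of `Ω`, one has
`Λ_{UY} ≫ Sε_Y = FΩ_Y ≫ ε_{SY}`, after which `Ω` cancels against `Ω⁻¹` and counit naturality
finishes.
-/

open CategoryTheory

namespace Stmt13

variable {A B X : Type*} [Category A] [Category B] [Category X]

/-- The mate `Λ : F∘C ⟶ S∘F` of `Ω`, componentwise. -/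
def mate (F : A ⥤ B) (U : B ⥤ A) (adj : F ⊣ U) (S : B ⥤ B) (C : A ⥤ A)
    (Ω : U ⋙ C ≅ S ⋙ U) (X' : A) : F.obj (C.obj X') ⟶ S.obj (F.obj X') :=
  F.map (C.map (adj.unit.app X')) ≫ F.map (Ω.hom.app (F.obj X')) ≫
    adj.counit.app (S.obj (F.obj X'))

/-- `θ := (Ω⁻¹F) ∘ (UΛ) : B∘C ⟶ C∘B`, componentwise. -/
def theta (F : A ⥤ B) (U : B ⥤ A) (adj : F ⊣ U) (S : B ⥤ B) (C : A ⥤ A)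
    (Ω : U ⋙ C ≅ S ⋙ U) (X' : A) :
    U.obj (F.obj (C.obj X')) ⟶ C.obj (U.obj (F.obj X')) :=
  U.map (mate F U adj S C Ω X') ≫ Ω.inv.app (F.obj X')

section Entwining

variable {F : A ⥤ B} {U : B ⥤ A} (adj : F ⊣ U) {S : B ⥤ B} {C : A ⥤ A} (Ω : U ⋙ C ≅ S ⋙ U)

lemma mate_app_obj_comp_map_counit (Y : B) :
    mate F U adj S C Ω (U.obj Y) ≫ S.map (adj.counit.app Y) =
      F.map (Ω.hom.app Y) ≫ adj.counit.app (S.obj Y) := by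
  have hΩ : C.map (U.map (adj.counit.app Y)) ≫ Ω.hom.app Y =
      Ω.hom.app (F.obj (U.obj Y)) ≫ U.map (S.map (adj.counit.app Y)) :=
    Ω.hom.naturality _
  have hε : adj.counit.app (S.obj (F.obj (U.obj Y))) ≫ S.map (adj.counit.app Y) =
      F.map (U.map (S.map (adj.counit.app Y))) ≫ adj.counit.app (S.obj Y) :=
    (adj.counit.naturality _).symm
  rw [mate, Category.assoc, Category.assoc, hε, ← F.map_comp_assoc, ← F.map_comp_assoc,
    Category.assoc, ← hΩ, ← C.map_comp_assoc, adj.right_triangle_components]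
  simp

lemma theta_entwining {Y : B} (a : Y ⟶ S.obj Y) :
    U.map (F.map (U.map a ≫ Ω.inv.app Y)) ≫ theta F U adj S C Ω (U.obj Y) ≫
        C.map (U.map (adj.counit.app Y)) =
      U.map (adj.counit.app Y) ≫ U.map a ≫ Ω.inv.app Y := by
  have hΩ : U.map (S.map (adj.counit.app Y)) ≫ Ω.inv.app Y =
      Ω.inv.app (F.obj (U.obj Y)) ≫ C.map (U.map (adj.counit.app Y)) := by
    simpa using Ω.inv.naturality (adj.counit.app Y)
  have hB : F.map (U.map a ≫ Ω.inv.app Y) ≫ mate F U adj S C Ω (U.obj Y) ≫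
      S.map (adj.counit.app Y) = adj.counit.app Y ≫ a := by
    rw [mate_app_obj_comp_map_counit, ← F.map_comp_assoc, Category.assoc, Iso.inv_hom_id_app]
    simp
  rw [theta, Category.assoc, ← hΩ, ← U.map_comp_assoc, ← U.map_comp_assoc, Category.assoc, hB,
    U.map_comp_assoc]

end Entwining

section LaxComonadMorphism

variable {U : B ⥤ A} {SS : Comonad B} {CC : Comonad A} (Ω : U ⋙ CC.toFunctor ≅ SS.toFunctor ⋙ U)

lemma inv_app_comp_δ {Y : B}
    (hδ : Ω.hom.app Y ≫ U.map (SS.δ.app Y)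
      = CC.δ.app (U.obj Y) ≫ CC.map (Ω.hom.app Y) ≫ Ω.hom.app (SS.obj Y)) :
    Ω.inv.app Y ≫ CC.δ.app (U.obj Y) =
      U.map (SS.δ.app Y) ≫ Ω.inv.app (SS.obj Y) ≫ CC.map (Ω.inv.app Y) := by
  rw [← Iso.app_inv, Iso.inv_comp_eq, Iso.app_hom, reassoc_of% hδ, Iso.hom_inv_id_app_assoc,
    ← CC.map_comp, Iso.app_inv, Iso.hom_inv_id_app]
  simp

lemma inv_app_comp_ε {Y : B}
    (hε : Ω.hom.app Y ≫ U.map (SS.ε.app Y) = CC.ε.app (U.obj Y)) :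
    Ω.inv.app Y ≫ CC.ε.app (U.obj Y) = U.map (SS.ε.app Y) := by
  rw [← hε, Iso.inv_hom_id_app_assoc]

def mapCoalgebra
    (hδ : ∀ Y : B, Ω.hom.app Y ≫ U.map (SS.δ.app Y)
      = CC.δ.app (U.obj Y) ≫ CC.map (Ω.hom.app Y) ≫ Ω.hom.app (SS.obj Y))
    (hε : ∀ Y : B, Ω.hom.app Y ≫ U.map (SS.ε.app Y) = CC.ε.app (U.obj Y))
    (N : SS.Coalgebra) : CC.Coalgebra where
  A := U.obj N.A
  a := U.map N.a ≫ Ω.inv.app N.A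
  counit := by
    rw [Category.assoc, inv_app_comp_ε Ω (hε N.A), ← U.map_comp, N.counit, U.map_id]
  coassoc := by
    have hnat : U.map (SS.map N.a) ≫ Ω.inv.app (SS.obj N.A) =
        Ω.inv.app N.A ≫ CC.map (U.map N.a) :=
      Ω.inv.naturality N.a
    rw [Category.assoc, inv_app_comp_δ Ω (hδ N.A), ← U.map_comp_assoc, N.coassoc,
      U.map_comp_assoc, reassoc_of% hnat, CC.map_comp, Category.assoc]

end LaxComonadMorphism

theorem UM_entwined_algebra
    (F : A ⥤ B) (U : B ⥤ A) (adj : F ⊣ U)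
    (SS : Comonad B) (CC : Comonad A)
    (Ω : U ⋙ CC.toFunctor ≅ SS.toFunctor ⋙ U)
    -- `Ω` is a lax morphism of comonads
    (hΩδ : ∀ Y : B,
      Ω.hom.app Y ≫ U.map (SS.δ.app Y)
      = CC.δ.app (U.obj Y) ≫ CC.map (Ω.hom.app Y) ≫ Ω.hom.app (SS.obj Y))
    (hΩε : ∀ Y : B, Ω.hom.app Y ≫ U.map (SS.ε.app Y) = CC.ε.app (U.obj Y))
    (M : X ⥤ B)
    -- `∇` is an `𝕊`-coalgebra structure on `M`:
    (nab : (M : X ⥤ B) ⟶ (M ⋙ SS.toFunctor : X ⥤ B))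
    (hcoassoc : ∀ x : X,
      nab.app x ≫ SS.δ.app (M.obj x) = nab.app x ≫ SS.map (nab.app x))
    (hcounit : ∀ x : X, nab.app x ≫ SS.ε.app (M.obj x) = 𝟙 (M.obj x)) :
    -- `β := UεM` is a `𝔹`-algebra structure on `UM`:
    (∀ x : X,
      U.map (adj.counit.app (F.obj (U.obj (M.obj x)))) ≫
        U.map (adj.counit.app (M.obj x))
      = U.map (F.map (U.map (adj.counit.app (M.obj x)))) ≫
          U.map (adj.counit.app (M.obj x))) ∧
    (∀ x : X,
      adj.unit.app (U.obj (M.obj x)) ≫ U.map (adj.counit.app (M.obj x))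
      = 𝟙 (U.obj (M.obj x))) ∧
    -- `∇' := (Ω⁻¹M)∘(U∇)` is a `ℂ`-coalgebra structure on `UM`:
    (∀ x : X,
      (U.map (nab.app x) ≫ Ω.inv.app (M.obj x)) ≫ CC.δ.app (U.obj (M.obj x))
      = (U.map (nab.app x) ≫ Ω.inv.app (M.obj x)) ≫
          CC.map (U.map (nab.app x) ≫ Ω.inv.app (M.obj x))) ∧
    (∀ x : X,
      (U.map (nab.app x) ≫ Ω.inv.app (M.obj x)) ≫ CC.ε.app (U.obj (M.obj x))
      = 𝟙 (U.obj (M.obj x))) ∧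
    -- the entwining condition `(Cβ)∘(θUM)∘(B∇') = ∇'∘β`:
    (∀ x : X,
      U.map (F.map (U.map (nab.app x) ≫ Ω.inv.app (M.obj x))) ≫
        theta F U adj SS.toFunctor CC.toFunctor Ω (U.obj (M.obj x)) ≫
        CC.map (U.map (adj.counit.app (M.obj x)))
      = U.map (adj.counit.app (M.obj x)) ≫
          (U.map (nab.app x) ≫ Ω.inv.app (M.obj x))) := by
  let N (x : X) : SS.Coalgebra := ⟨M.obj x, nab.app x, hcounit x, hcoassoc x⟩
  let UN (x : X) : CC.Coalgebra := mapCoalgebra Ω hΩδ hΩε (N x)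
  let UM (x : X) : adj.toMonad.Algebra := (Monad.comparison adj).obj (M.obj x)
  exact ⟨fun x => (UM x).assoc, fun x => (UM x).unit, fun x => (UN x).coassoc,
    fun x => (UN x).counit, fun x => theta_entwining adj Ω (nab.app x)⟩

end Stmt13
end

section
/- The operators t_n := (λT^n M)∘(Nχ^n M)∘(NT^n ρ) : N T^{n+1} M → N T^{n+1} M make the simplicial functor CC_𝕋(N,M) duplicial; that is, for all n: d_i ∘ t_n = t_{n-1} ∘ d_{i-1} for 1 ≤ i ≤ n, d_0 ∘ t_n = d_n, s_j ∘ t_n = t_{n+1} ∘ s_{j-1} for 1 ≤ j ≤ n, and s_0 ∘ t_n = t_{n+1} ∘ t_{n+1} ∘ s_n. Dually, the operators t'_n := (NS^n ρ)∘(Nχ̂^n M)∘(λ S^n M) make CC_𝕊^op(N,M) duplicial. -/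
/-!
Write `g_n : T^{n+1}M ⟶ ST^nM` for `gmap` and `h_n : TS^nM ⟶ S^{n+1}M` for `hmap`, so that
`t_n = λ ∘ N g_n` and `t'_n = N h_n ∘ λ`. Both are iterates of a way of pushing a morphism
through `χ`: `g_{n+1} = χ ∘ T g_n` and `h_{n+1} = S h_n ∘ χ` (`liftT`, `liftS`). Naturality
of `χ` and the four axioms of the distributive law say how one such step commutes with the face
and degeneracy maps, so by induction, with the coalgebra axioms of `ρ` as base cases, `g` and `h`
intertwine the bar constructions of `T` and `S`. The duplicial identities follow by moving `λ`
past the remaining map, using its naturality or its coalgebra axioms.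
-/

open CategoryTheory

namespace Stmt14

variable {B X Y : Type*} [Category B] [Category X] [Category Y]

/-- Iterated application of an endofunctor. -/
def iter (G : B ⥤ B) : ℕ → B → B
  | 0, Z => Z
  | n + 1, Z => G.obj (iter G n Z)

/-- `T^i ε^T T^{n-i}` at `Z` (for `0 ≤ i ≤ n`), the `i`-th face operator
of the bar resolution (before applying `N` and evaluating at `M`). -/
def dmor (T : Comonad B) : (n i : ℕ) → (Z : B) →
    (iter T.toFunctor (n + 1) Z ⟶ iter T.toFunctor n Z)
  | n, 0, Z => T.ε.app (iter T.toFunctor n Z)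
  | 0, _ + 1, Z => T.ε.app Z
  | n + 1, i + 1, Z => T.map (dmor T n i Z)

/-- `T^j Δ^T T^{n-j}` at `Z` (for `0 ≤ j ≤ n`), the `j`-th degeneracy operator
of the bar resolution. -/
def smor (T : Comonad B) : (n j : ℕ) → (Z : B) →
    (iter T.toFunctor (n + 1) Z ⟶ iter T.toFunctor (n + 2) Z)
  | n, 0, Z => T.δ.app (iter T.toFunctor n Z)
  | 0, _ + 1, Z => T.δ.app Z
  | n + 1, j + 1, Z => T.map (smor T n j Z)

/-- The composite `(χ^n M) ∘ (T^n ρ) : T^{n+1}M ⟶ ST^nM` (componentwise),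
where `χ^n : T^nS → ST^n` is obtained by repeated application of `χ`. -/
def gmap (T S : Comonad B)
    (χ : (S.toFunctor ⋙ T.toFunctor : B ⥤ B) ⟶ (T.toFunctor ⋙ S.toFunctor : B ⥤ B))
    (M : X ⥤ B) (ρ : (M ⋙ T.toFunctor : X ⥤ B) ⟶ (M ⋙ S.toFunctor : X ⥤ B))
    (x : X) : (n : ℕ) →
    (iter T.toFunctor (n + 1) (M.obj x) ⟶ S.obj (iter T.toFunctor n (M.obj x)))
  | 0 => ρ.app x
  | n + 1 => T.map (gmap T S χ M ρ x n) ≫ χ.app (iter T.toFunctor n (M.obj x))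

/-- The composite `(S^n ρ) ∘ (χ̂^n M) : TS^nM ⟶ S^{n+1}M` (componentwise),
where `χ̂^n : TS^n → S^nT` is obtained by repeated application of `χ`. -/
def hmap (T S : Comonad B)
    (χ : (S.toFunctor ⋙ T.toFunctor : B ⥤ B) ⟶ (T.toFunctor ⋙ S.toFunctor : B ⥤ B))
    (M : X ⥤ B) (ρ : (M ⋙ T.toFunctor : X ⥤ B) ⟶ (M ⋙ S.toFunctor : X ⥤ B))
    (x : X) : (n : ℕ) →
    (T.obj (iter S.toFunctor n (M.obj x)) ⟶ iter S.toFunctor (n + 1) (M.obj x))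
  | 0 => ρ.app x
  | n + 1 => χ.app (iter S.toFunctor n (M.obj x)) ≫ S.map (hmap T S χ M ρ x n)

/-- The duplicial operator `t_n := (λT^nM)∘(Nχ^nM)∘(NT^nρ)` on `CC_𝕋(N,M)_n`. -/
def tT (T S : Comonad B)
    (χ : (S.toFunctor ⋙ T.toFunctor : B ⥤ B) ⟶ (T.toFunctor ⋙ S.toFunctor : B ⥤ B))
    (M : X ⥤ B) (ρ : (M ⋙ T.toFunctor : X ⥤ B) ⟶ (M ⋙ S.toFunctor : X ⥤ B))
    (N : B ⥤ Y) (lam : (S.toFunctor ⋙ N : B ⥤ Y) ⟶ (T.toFunctor ⋙ N : B ⥤ Y))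
    (x : X) (n : ℕ) :
    N.obj (iter T.toFunctor (n + 1) (M.obj x)) ⟶
      N.obj (iter T.toFunctor (n + 1) (M.obj x)) :=
  N.map (gmap T S χ M ρ x n) ≫ lam.app (iter T.toFunctor n (M.obj x))

/-- The duplicial operator `t'_n := (NS^nρ)∘(Nχ̂^nM)∘(λS^nM)` on `CC_𝕊^op(N,M)_n`. -/
def tS (T S : Comonad B)
    (χ : (S.toFunctor ⋙ T.toFunctor : B ⥤ B) ⟶ (T.toFunctor ⋙ S.toFunctor : B ⥤ B))
    (M : X ⥤ B) (ρ : (M ⋙ T.toFunctor : X ⥤ B) ⟶ (M ⋙ S.toFunctor : X ⥤ B))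
    (N : B ⥤ Y) (lam : (S.toFunctor ⋙ N : B ⥤ Y) ⟶ (T.toFunctor ⋙ N : B ⥤ Y))
    (x : X) (n : ℕ) :
    N.obj (iter S.toFunctor (n + 1) (M.obj x)) ⟶
      N.obj (iter S.toFunctor (n + 1) (M.obj x)) :=
  lam.app (iter S.toFunctor n (M.obj x)) ≫ N.map (hmap T S χ M ρ x n)

section DistributiveLaw

variable (T S : Comonad B)
  (χ : (S.toFunctor ⋙ T.toFunctor : B ⥤ B) ⟶ (T.toFunctor ⋙ S.toFunctor : B ⥤ B))
  {A A' C C' D D' : B}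

def liftT (g : A ⟶ S.obj C) : T.obj A ⟶ S.obj (T.obj C) :=
  T.map g ≫ χ.app C

def liftS (h : T.obj C ⟶ D) : T.obj (S.obj C) ⟶ S.obj D :=
  χ.app C ≫ S.map h

variable {T S χ}

lemma liftT_comp_map_map {g : A ⟶ S.obj C} {g' : A' ⟶ S.obj C'} {a : A ⟶ A'} {c : C ⟶ C'}
    (hsq : g ≫ S.map c = a ≫ g') :
    liftT T S χ g ≫ S.map (T.map c) = T.map a ≫ liftT T S χ g' := by
  have hnat := χ.naturality c
  dsimp only [Functor.comp_obj, Functor.comp_map] at hnat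
  simp only [liftT, Category.assoc, ← hnat, ← T.map_comp_assoc, hsq]

lemma liftT_comp_map_ε (h1 : ∀ Z : B, χ.app Z ≫ S.map (T.ε.app Z) = T.ε.app (S.obj Z))
    (g : A ⟶ S.obj C) :
    liftT T S χ g ≫ S.map (T.ε.app C) = T.ε.app A ≫ g := by
  simp only [liftT, Category.assoc, h1]
  exact T.ε.naturality g

lemma liftT_comp_ε (h2 : ∀ Z : B, χ.app Z ≫ S.ε.app (T.obj Z) = T.map (S.ε.app Z))
    (g : A ⟶ S.obj C) :
    liftT T S χ g ≫ S.ε.app (T.obj C) = T.map (g ≫ S.ε.app C) := by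
  simp only [liftT, Category.assoc, h2, T.map_comp]

lemma liftT_comp_map_δ (h3 : ∀ Z : B, χ.app Z ≫ S.map (T.δ.app Z)
      = T.δ.app (S.obj Z) ≫ T.map (χ.app Z) ≫ χ.app (T.obj Z))
    (g : A ⟶ S.obj C) :
    liftT T S χ g ≫ S.map (T.δ.app C) = T.δ.app A ≫ liftT T S χ (liftT T S χ g) := by
  have hnat := T.δ.naturality g
  dsimp only [Functor.comp_obj, Functor.comp_map] at hnat
  simp only [liftT, Category.assoc, h3, reassoc_of% hnat, T.map_comp]

lemma liftT_comp_δ (h4 : ∀ Z : B, χ.app Z ≫ S.δ.app (T.obj Z)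
      = T.map (S.δ.app Z) ≫ χ.app (S.obj Z) ≫ S.map (χ.app Z))
    {g : T.obj C ⟶ S.obj C} {s : T.obj C ⟶ T.obj (T.obj C)}
    (hg : s ≫ liftT T S χ g ≫ S.map g = g ≫ S.δ.app C) :
    T.map s ≫ liftT T S χ (liftT T S χ g) ≫ S.map (liftT T S χ g)
      = liftT T S χ g ≫ S.δ.app (T.obj C) := by
  have hχ := χ.naturality g
  dsimp only [Functor.comp_obj, Functor.comp_map] at hχ
  simp only [liftT, Category.assoc] at hg ⊢
  simp only [T.map_comp, S.map_comp, Category.assoc, ← reassoc_of% hχ]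
  simp only [← T.map_comp_assoc, hg]
  simp only [T.map_comp, Category.assoc, h4]

lemma liftS_comp_map {h : T.obj C ⟶ D} {h' : T.obj C' ⟶ D'} {a : C ⟶ C'} {c : D ⟶ D'}
    (hsq : h ≫ c = T.map a ≫ h') :
    liftS T S χ h ≫ S.map c = T.map (S.map a) ≫ liftS T S χ h' := by
  have hnat := χ.naturality a
  dsimp only [Functor.comp_obj, Functor.comp_map] at hnat
  rw [liftS, liftS, Category.assoc, ← S.map_comp, hsq, S.map_comp, reassoc_of% hnat]

lemma liftS_comp_map_eq_ε (h1 : ∀ Z : B, χ.app Z ≫ S.map (T.ε.app Z) = T.ε.app (S.obj Z))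
    {h : T.obj C ⟶ D} {c : D ⟶ C} (hc : h ≫ c = T.ε.app C) :
    liftS T S χ h ≫ S.map c = T.ε.app (S.obj C) := by
  simp only [liftS, Category.assoc, ← S.map_comp, hc, h1]

lemma liftS_comp_ε (h2 : ∀ Z : B, χ.app Z ≫ S.ε.app (T.obj Z) = T.map (S.ε.app Z))
    (h : T.obj C ⟶ D) :
    liftS T S χ h ≫ S.ε.app D = T.map (S.ε.app C) ≫ h := by
  have hnat := S.ε.naturality h
  dsimp only [Functor.id_obj, Functor.id_map] at hnat
  simp only [liftS, Category.assoc, hnat, reassoc_of% (h2 C)]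

lemma liftS_comp_δ (h4 : ∀ Z : B, χ.app Z ≫ S.δ.app (T.obj Z)
      = T.map (S.δ.app Z) ≫ χ.app (S.obj Z) ≫ S.map (χ.app Z))
    (h : T.obj C ⟶ D) :
    liftS T S χ h ≫ S.δ.app D = T.map (S.δ.app C) ≫ liftS T S χ (liftS T S χ h) := by
  have hnat := S.δ.naturality h
  dsimp only [Functor.comp_obj, Functor.comp_map] at hnat
  simp only [liftS, Category.assoc, hnat, reassoc_of% (h4 C), S.map_comp]

lemma liftS_comp_map_eq_δ_comp (h3 : ∀ Z : B, χ.app Z ≫ S.map (T.δ.app Z)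
      = T.δ.app (S.obj Z) ≫ T.map (χ.app Z) ≫ χ.app (T.obj Z))
    {h : T.obj C ⟶ S.obj C} {s : S.obj C ⟶ S.obj (S.obj C)}
    (hh : h ≫ s = T.δ.app C ≫ T.map h ≫ liftS T S χ h) :
    liftS T S χ h ≫ S.map s
      = T.δ.app (S.obj C) ≫ T.map (liftS T S χ h) ≫ liftS T S χ (liftS T S χ h) := by
  have hχ := χ.naturality h
  dsimp only [Functor.comp_obj, Functor.comp_map] at hχ
  simp only [liftS] at hh ⊢
  simp only [Category.assoc, ← S.map_comp, hh]
  simp only [S.map_comp, reassoc_of% (h3 C), T.map_comp, Category.assoc, reassoc_of% hχ]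

end DistributiveLaw

lemma dmor_zero (T : Comonad B) (n : ℕ) (Z : B) :
    dmor T n 0 Z = T.ε.app (iter T.toFunctor n Z) := by
  cases n <;> rfl

lemma smor_zero (T : Comonad B) (n : ℕ) (Z : B) :
    smor T n 0 Z = T.δ.app (iter T.toFunctor n Z) := by
  cases n <;> rfl

section RightCoalgebra

variable {T S : Comonad B}
  {χ : (S.toFunctor ⋙ T.toFunctor : B ⥤ B) ⟶ (T.toFunctor ⋙ S.toFunctor : B ⥤ B)}
  {M : X ⥤ B} {ρ : (M ⋙ T.toFunctor : X ⥤ B) ⟶ (M ⋙ S.toFunctor : X ⥤ B)} {x : X}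

lemma gmap_comp_map_dmor (h1 : ∀ Z : B, χ.app Z ≫ S.map (T.ε.app Z) = T.ε.app (S.obj Z))
    {n k : ℕ} (hk : k ≤ n) :
    gmap T S χ M ρ x (n + 1) ≫ S.map (dmor T n k (M.obj x))
      = dmor T (n + 1) k (M.obj x) ≫ gmap T S χ M ρ x n := by
  induction k generalizing n with
  | zero =>
    rw [dmor_zero, dmor_zero]
    exact liftT_comp_map_ε h1 _
  | succ k ih =>
    obtain ⟨n, rfl⟩ : ∃ m, n = m + 1 := ⟨n - 1, by omega⟩
    exact liftT_comp_map_map (ih (by omega))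

lemma gmap_comp_ε (h2 : ∀ Z : B, χ.app Z ≫ S.ε.app (T.obj Z) = T.map (S.ε.app Z))
    (hρ2 : ρ.app x ≫ S.ε.app (M.obj x) = T.ε.app (M.obj x)) (n : ℕ) :
    gmap T S χ M ρ x n ≫ S.ε.app (iter T.toFunctor n (M.obj x)) = dmor T n n (M.obj x) := by
  induction n with
  | zero => exact hρ2
  | succ n ih => exact (liftT_comp_ε h2 _).trans (congrArg T.map ih)

lemma gmap_comp_map_smor (h3 : ∀ Z : B, χ.app Z ≫ S.map (T.δ.app Z)
      = T.δ.app (S.obj Z) ≫ T.map (χ.app Z) ≫ χ.app (T.obj Z))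
    {n k : ℕ} (hk : k ≤ n) :
    gmap T S χ M ρ x (n + 1) ≫ S.map (smor T n k (M.obj x))
      = smor T (n + 1) k (M.obj x) ≫ gmap T S χ M ρ x (n + 2) := by
  induction k generalizing n with
  | zero =>
    rw [smor_zero, smor_zero]
    exact liftT_comp_map_δ h3 _
  | succ k ih =>
    obtain ⟨n, rfl⟩ : ∃ m, n = m + 1 := ⟨n - 1, by omega⟩
    exact liftT_comp_map_map (ih (by omega))

lemma smor_comp_gmap_comp_map_gmap (h4 : ∀ Z : B, χ.app Z ≫ S.δ.app (T.obj Z)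
      = T.map (S.δ.app Z) ≫ χ.app (S.obj Z) ≫ S.map (χ.app Z))
    (hρ1 : ρ.app x ≫ S.δ.app (M.obj x)
      = T.δ.app (M.obj x) ≫ T.map (ρ.app x) ≫ χ.app (M.obj x) ≫ S.map (ρ.app x))
    (n : ℕ) :
    smor T n n (M.obj x) ≫ gmap T S χ M ρ x (n + 1) ≫ S.map (gmap T S χ M ρ x n)
      = gmap T S χ M ρ x n ≫ S.δ.app (iter T.toFunctor n (M.obj x)) := by
  induction n with
  | zero => exact (hρ1.trans (congrArg (T.δ.app _ ≫ ·) (Category.assoc _ _ _).symm)).symm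
  | succ n ih => exact liftT_comp_δ h4 ih

lemma hmap_comp_dmor (h2 : ∀ Z : B, χ.app Z ≫ S.ε.app (T.obj Z) = T.map (S.ε.app Z))
    {n k : ℕ} (hk : k ≤ n) :
    hmap T S χ M ρ x (n + 1) ≫ dmor S (n + 1) k (M.obj x)
      = T.map (dmor S n k (M.obj x)) ≫ hmap T S χ M ρ x n := by
  induction k generalizing n with
  | zero =>
    rw [dmor_zero, dmor_zero]
    exact liftS_comp_ε h2 _
  | succ k ih =>
    obtain ⟨n, rfl⟩ : ∃ m, n = m + 1 := ⟨n - 1, by omega⟩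
    exact liftS_comp_map (ih (by omega))

lemma hmap_comp_dmor_self (h1 : ∀ Z : B, χ.app Z ≫ S.map (T.ε.app Z) = T.ε.app (S.obj Z))
    (hρ2 : ρ.app x ≫ S.ε.app (M.obj x) = T.ε.app (M.obj x)) (n : ℕ) :
    hmap T S χ M ρ x n ≫ dmor S n n (M.obj x) = T.ε.app (iter S.toFunctor n (M.obj x)) := by
  induction n with
  | zero => exact hρ2
  | succ n ih => exact liftS_comp_map_eq_ε h1 ih

lemma hmap_comp_smor (h4 : ∀ Z : B, χ.app Z ≫ S.δ.app (T.obj Z)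
      = T.map (S.δ.app Z) ≫ χ.app (S.obj Z) ≫ S.map (χ.app Z))
    {n k : ℕ} (hk : k ≤ n) :
    hmap T S χ M ρ x (n + 1) ≫ smor S (n + 1) k (M.obj x)
      = T.map (smor S n k (M.obj x)) ≫ hmap T S χ M ρ x (n + 2) := by
  induction k generalizing n with
  | zero =>
    rw [smor_zero, smor_zero]
    exact liftS_comp_δ h4 _
  | succ k ih =>
    obtain ⟨n, rfl⟩ : ∃ m, n = m + 1 := ⟨n - 1, by omega⟩
    exact liftS_comp_map (ih (by omega))

lemma hmap_comp_smor_self (h3 : ∀ Z : B, χ.app Z ≫ S.map (T.δ.app Z)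
      = T.δ.app (S.obj Z) ≫ T.map (χ.app Z) ≫ χ.app (T.obj Z))
    (hρ1 : ρ.app x ≫ S.δ.app (M.obj x)
      = T.δ.app (M.obj x) ≫ T.map (ρ.app x) ≫ χ.app (M.obj x) ≫ S.map (ρ.app x))
    (n : ℕ) :
    hmap T S χ M ρ x n ≫ smor S n n (M.obj x)
      = T.δ.app (iter S.toFunctor n (M.obj x)) ≫ T.map (hmap T S χ M ρ x n)
          ≫ hmap T S χ M ρ x (n + 1) := by
  induction n with
  | zero => exact hρ1
  | succ n ih => exact liftS_comp_map_eq_δ_comp h3 ih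

end RightCoalgebra

section LeftCoalgebra

variable {T S : Comonad B}
  {χ : (S.toFunctor ⋙ T.toFunctor : B ⥤ B) ⟶ (T.toFunctor ⋙ S.toFunctor : B ⥤ B)}
  {N : B ⥤ Y} {lam : (S.toFunctor ⋙ N : B ⥤ Y) ⟶ (T.toFunctor ⋙ N : B ⥤ Y)}
  {A A' C C' D D' : B}

lemma map_comp_lam_comp_map_map {g : A ⟶ S.obj C} {g' : A' ⟶ S.obj C'} {a : A ⟶ A'}
    {c : C ⟶ C'} (hsq : g ≫ S.map c = a ≫ g') :
    (N.map g ≫ lam.app C) ≫ N.map (T.map c) = N.map a ≫ N.map g' ≫ lam.app C' := by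
  have hnat := lam.naturality c
  dsimp only [Functor.comp_obj, Functor.comp_map] at hnat
  rw [Category.assoc, ← hnat, ← N.map_comp_assoc, hsq, N.map_comp_assoc]

lemma map_comp_lam_comp_map_ε
    (hlam2 : ∀ Z : B, lam.app Z ≫ N.map (T.ε.app Z) = N.map (S.ε.app Z))
    (g : A ⟶ S.obj C) :
    (N.map g ≫ lam.app C) ≫ N.map (T.ε.app C) = N.map (g ≫ S.ε.app C) := by
  rw [Category.assoc, hlam2, N.map_comp]

lemma map_comp_lam_comp_map_δ (hlam1 : ∀ Z : B, lam.app Z ≫ N.map (T.δ.app Z)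
      = N.map (S.δ.app Z) ≫ lam.app (S.obj Z) ≫ N.map (χ.app Z) ≫ lam.app (T.obj Z))
    {g : T.obj C ⟶ S.obj C} {s : T.obj C ⟶ T.obj (T.obj C)}
    (hg : s ≫ liftT T S χ g ≫ S.map g = g ≫ S.δ.app C) :
    (N.map g ≫ lam.app C) ≫ N.map (T.δ.app C)
      = N.map s ≫ (N.map (liftT T S χ g) ≫ lam.app (T.obj C))
          ≫ (N.map (liftT T S χ g) ≫ lam.app (T.obj C)) := by
  have hnat := lam.naturality g
  dsimp only [Functor.comp_obj, Functor.comp_map] at hnat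
  rw [Category.assoc, hlam1, ← N.map_comp_assoc, ← hg]
  simp only [N.map_comp, Category.assoc, reassoc_of% hnat, liftT]

lemma lam_comp_map_comp_map {h : T.obj C ⟶ D} {h' : T.obj C' ⟶ D'} {a : C ⟶ C'} {c : D ⟶ D'}
    (hsq : h ≫ c = T.map a ≫ h') :
    (lam.app C ≫ N.map h) ≫ N.map c = N.map (S.map a) ≫ lam.app C' ≫ N.map h' := by
  have hnat := lam.naturality a
  dsimp only [Functor.comp_obj, Functor.comp_map] at hnat
  rw [Category.assoc, ← N.map_comp, hsq, N.map_comp, reassoc_of% hnat]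

lemma lam_comp_map_comp_map_eq_map_ε
    (hlam2 : ∀ Z : B, lam.app Z ≫ N.map (T.ε.app Z) = N.map (S.ε.app Z))
    {h : T.obj C ⟶ D} {c : D ⟶ C} (hc : h ≫ c = T.ε.app C) :
    (lam.app C ≫ N.map h) ≫ N.map c = N.map (S.ε.app C) := by
  rw [Category.assoc, ← N.map_comp, hc, hlam2]

lemma lam_comp_map_comp_map_eq_map_δ_comp (hlam1 : ∀ Z : B, lam.app Z ≫ N.map (T.δ.app Z)
      = N.map (S.δ.app Z) ≫ lam.app (S.obj Z) ≫ N.map (χ.app Z) ≫ lam.app (T.obj Z))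
    {h : T.obj C ⟶ S.obj C} {s : S.obj C ⟶ S.obj (S.obj C)}
    (hh : h ≫ s = T.δ.app C ≫ T.map h ≫ liftS T S χ h) :
    (lam.app C ≫ N.map h) ≫ N.map s
      = N.map (S.δ.app C) ≫ (lam.app (S.obj C) ≫ N.map (liftS T S χ h))
          ≫ (lam.app (S.obj C) ≫ N.map (liftS T S χ h)) := by
  have hnat := lam.naturality h
  dsimp only [Functor.comp_obj, Functor.comp_map] at hnat
  rw [Category.assoc, ← N.map_comp, hh]
  simp only [N.map_comp, reassoc_of% (hlam1 C), reassoc_of% hnat, liftS, Category.assoc]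

end LeftCoalgebra

theorem duplicial_structures
    (T S : Comonad B)
    (χ : (S.toFunctor ⋙ T.toFunctor : B ⥤ B) ⟶ (T.toFunctor ⋙ S.toFunctor : B ⥤ B))
    -- `χ` is a comonad distributive law:
    (h1 : ∀ Z : B, χ.app Z ≫ S.map (T.ε.app Z) = T.ε.app (S.obj Z))
    (h2 : ∀ Z : B, χ.app Z ≫ S.ε.app (T.obj Z) = T.map (S.ε.app Z))
    (h3 : ∀ Z : B, χ.app Z ≫ S.map (T.δ.app Z)
            = T.δ.app (S.obj Z) ≫ T.map (χ.app Z) ≫ χ.app (T.obj Z))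
    (h4 : ∀ Z : B, χ.app Z ≫ S.δ.app (T.obj Z)
            = T.map (S.δ.app Z) ≫ χ.app (S.obj Z) ≫ S.map (χ.app Z))
    -- `(M, ρ)` is a right `χ`-coalgebra:
    (M : X ⥤ B) (ρ : (M ⋙ T.toFunctor : X ⥤ B) ⟶ (M ⋙ S.toFunctor : X ⥤ B))
    (hρ1 : ∀ x : X,
      ρ.app x ≫ S.δ.app (M.obj x)
      = T.δ.app (M.obj x) ≫ T.map (ρ.app x) ≫ χ.app (M.obj x) ≫ S.map (ρ.app x))
    (hρ2 : ∀ x : X, ρ.app x ≫ S.ε.app (M.obj x) = T.ε.app (M.obj x))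
    -- `(N, λ)` is a left `χ`-coalgebra:
    (N : B ⥤ Y) (lam : (S.toFunctor ⋙ N : B ⥤ Y) ⟶ (T.toFunctor ⋙ N : B ⥤ Y))
    (hlam1 : ∀ Z : B,
      lam.app Z ≫ N.map (T.δ.app Z)
      = N.map (S.δ.app Z) ≫ lam.app (S.obj Z) ≫ N.map (χ.app Z) ≫ lam.app (T.obj Z))
    (hlam2 : ∀ Z : B, lam.app Z ≫ N.map (T.ε.app Z) = N.map (S.ε.app Z)) :
    -- `CC_𝕋(N,M)` is duplicial with operator `t_n`:
    -- `d_i ∘ t_n = t_{n-1} ∘ d_{i-1}` for `1 ≤ i ≤ n`: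
    (∀ (n : ℕ) (x : X) (i : ℕ), 1 ≤ i → i ≤ n + 1 →
      tT T S χ M ρ N lam x (n + 1) ≫ N.map (dmor T (n + 1) i (M.obj x))
      = N.map (dmor T (n + 1) (i - 1) (M.obj x)) ≫ tT T S χ M ρ N lam x n) ∧
    -- `d_0 ∘ t_n = d_n`:
    (∀ (n : ℕ) (x : X),
      tT T S χ M ρ N lam x n ≫ N.map (dmor T n 0 (M.obj x))
      = N.map (dmor T n n (M.obj x))) ∧
    -- `s_j ∘ t_n = t_{n+1} ∘ s_{j-1}` for `1 ≤ j ≤ n`: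
    (∀ (n : ℕ) (x : X) (j : ℕ), 1 ≤ j → j ≤ n →
      tT T S χ M ρ N lam x n ≫ N.map (smor T n j (M.obj x))
      = N.map (smor T n (j - 1) (M.obj x)) ≫ tT T S χ M ρ N lam x (n + 1)) ∧
    -- `s_0 ∘ t_n = t_{n+1}² ∘ s_n`:
    (∀ (n : ℕ) (x : X),
      tT T S χ M ρ N lam x n ≫ N.map (smor T n 0 (M.obj x))
      = N.map (smor T n n (M.obj x)) ≫ tT T S χ M ρ N lam x (n + 1) ≫
          tT T S χ M ρ N lam x (n + 1)) ∧
    -- `CC_𝕊^op(N,M)` is duplicial with operator `t'_n`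
    -- (recall the faces are `d_i = NS^{n-i}ε^S S^iM`, degeneracies
    --  `s_j = NS^{n-j}Δ^S S^jM`):
    (∀ (n : ℕ) (x : X) (i : ℕ), 1 ≤ i → i ≤ n + 1 →
      tS T S χ M ρ N lam x (n + 1) ≫ N.map (dmor S (n + 1) (n + 1 - i) (M.obj x))
      = N.map (dmor S (n + 1) (n + 2 - i) (M.obj x)) ≫ tS T S χ M ρ N lam x n) ∧
    (∀ (n : ℕ) (x : X),
      tS T S χ M ρ N lam x n ≫ N.map (dmor S n n (M.obj x))
      = N.map (dmor S n 0 (M.obj x))) ∧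
    (∀ (n : ℕ) (x : X) (j : ℕ), 1 ≤ j → j ≤ n →
      tS T S χ M ρ N lam x n ≫ N.map (smor S n (n - j) (M.obj x))
      = N.map (smor S n (n - (j - 1)) (M.obj x)) ≫ tS T S χ M ρ N lam x (n + 1)) ∧
    (∀ (n : ℕ) (x : X),
      tS T S χ M ρ N lam x n ≫ N.map (smor S n n (M.obj x))
      = N.map (smor S n 0 (M.obj x)) ≫ tS T S χ M ρ N lam x (n + 1) ≫
          tS T S χ M ρ N lam x (n + 1)) := by
  refine ⟨fun n x i hi hin => ?_, fun n x => ?_, fun n x j hj hjn => ?_, fun n x => ?_,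
    fun n x i hi hin => ?_, fun n x => ?_, fun n x j hj hjn => ?_, fun n x => ?_⟩
  · obtain ⟨k, rfl⟩ : ∃ k, i = k + 1 := ⟨i - 1, by omega⟩
    exact map_comp_lam_comp_map_map (gmap_comp_map_dmor h1 (by omega : k ≤ n))
  · rw [dmor_zero, ← gmap_comp_ε h2 (hρ2 x)]
    exact map_comp_lam_comp_map_ε hlam2 _
  · obtain ⟨m, rfl⟩ : ∃ m, n = m + 1 := ⟨n - 1, by omega⟩
    obtain ⟨k, rfl⟩ : ∃ k, j = k + 1 := ⟨j - 1, by omega⟩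
    exact map_comp_lam_comp_map_map (gmap_comp_map_smor h3 (by omega : k ≤ m))
  · rw [smor_zero]
    exact map_comp_lam_comp_map_δ hlam1 (smor_comp_gmap_comp_map_gmap h4 (hρ1 x) n)
  · obtain ⟨k, hk, hi₁, hi₂⟩ : ∃ k, k ≤ n ∧ n + 1 - i = k ∧ n + 2 - i = k + 1 :=
      ⟨n + 1 - i, by omega, rfl, by omega⟩
    rw [hi₁, hi₂]
    exact lam_comp_map_comp_map (hmap_comp_dmor h2 hk)
  · rw [dmor_zero]
    exact lam_comp_map_comp_map_eq_map_ε hlam2 (hmap_comp_dmor_self h1 (hρ2 x) n)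
  · obtain ⟨m, rfl⟩ : ∃ m, n = m + 1 := ⟨n - 1, by omega⟩
    obtain ⟨k, hk, hj₁, hj₂⟩ :
        ∃ k, k ≤ m ∧ m + 1 - j = k ∧ m + 1 - (j - 1) = k + 1 :=
      ⟨m + 1 - j, by omega, rfl, by omega⟩
    rw [hj₁, hj₂]
    exact lam_comp_map_comp_map (hmap_comp_smor h4 hk)
  · rw [smor_zero]
    exact lam_comp_map_comp_map_eq_map_δ_comp hlam1 (hmap_comp_smor_self h3 (hρ1 x) n)

end Stmt14
end

section
/- Let (Σ, σ, γ) be a 1-cell from the comonad distributive law χ : TS → ST on B to the comonad distributive law τ : GC' → C'G on D; that is, Σ : B → D is a functor, σ : GΣ → ΣT is a lax morphism of comonads, γ : ΣS → C'Σ is a colax morphism of comonads, and the Yang–Baxter condition (C'σ)∘(τΣ)∘(Gγ) = (γT)∘(Σχ)∘(σS) holds. If (M, ρ) is a right χ-coalgebra, then (ΣM, (γM)∘(Σρ)∘(σM)) is a right τ-coalgebra. -/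
/-!
The twisted coaction `G Σ Z → Σ T Z → Σ S Z → C' Σ Z` is counital because `σ` and `γ` respect the
counits, and coassociative because, after expanding the coassociativity of `ρ` between `σ` and `γ`,
naturality moves `σ` and `γ` past `ρ` until the Yang–Baxter condition exchanges `Σ χ` for `τ Σ`.
-/

open CategoryTheory

namespace Stmt17

variable {B D X : Type*} [Category B] [Category D] [Category X]

section TwistCoaction

variable {T S : Comonad B} {G C' : Comonad D} {Sig : B ⥤ D}
  (σ : (Sig ⋙ G.toFunctor : B ⥤ D) ⟶ (T.toFunctor ⋙ Sig : B ⥤ D))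
  (γ : (S.toFunctor ⋙ Sig : B ⥤ D) ⟶ (Sig ⋙ C'.toFunctor : B ⥤ D))

def twistCoaction {Z : B} (f : T.obj Z ⟶ S.obj Z) : G.obj (Sig.obj Z) ⟶ C'.obj (Sig.obj Z) :=
  σ.app Z ≫ Sig.map f ≫ γ.app Z

variable {σ γ}

theorem twistCoaction_counit
    (hσε : ∀ Z : B, σ.app Z ≫ Sig.map (T.ε.app Z) = G.ε.app (Sig.obj Z))
    (hγε : ∀ Z : B, γ.app Z ≫ C'.ε.app (Sig.obj Z) = Sig.map (S.ε.app Z))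
    {Z : B} {f : T.obj Z ⟶ S.obj Z} (hf : f ≫ S.ε.app Z = T.ε.app Z) :
    twistCoaction σ γ f ≫ C'.ε.app (Sig.obj Z) = G.ε.app (Sig.obj Z) := by
  rw [twistCoaction, Category.assoc, Category.assoc, hγε, ← Functor.map_comp, hf, hσε]

theorem twistCoaction_comul
    {χ : (S.toFunctor ⋙ T.toFunctor : B ⥤ B) ⟶ (T.toFunctor ⋙ S.toFunctor : B ⥤ B)}
    {τ : (C'.toFunctor ⋙ G.toFunctor : D ⥤ D) ⟶ (G.toFunctor ⋙ C'.toFunctor : D ⥤ D)}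
    (hσδ : ∀ Z : B,
      σ.app Z ≫ Sig.map (T.δ.app Z)
      = G.δ.app (Sig.obj Z) ≫ G.map (σ.app Z) ≫ σ.app (T.obj Z))
    (hγδ : ∀ Z : B,
      γ.app Z ≫ C'.δ.app (Sig.obj Z)
      = Sig.map (S.δ.app Z) ≫ γ.app (S.obj Z) ≫ C'.map (γ.app Z))
    (hYB : ∀ Z : B,
      G.map (γ.app Z) ≫ τ.app (Sig.obj Z) ≫ C'.map (σ.app Z)
      = σ.app (S.obj Z) ≫ Sig.map (χ.app Z) ≫ γ.app (T.obj Z))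
    {Z : B} {f : T.obj Z ⟶ S.obj Z}
    (hf : f ≫ S.δ.app Z = T.δ.app Z ≫ T.map f ≫ χ.app Z ≫ S.map f) :
    twistCoaction σ γ f ≫ C'.δ.app (Sig.obj Z)
      = G.δ.app (Sig.obj Z) ≫ G.map (twistCoaction σ γ f) ≫ τ.app (Sig.obj Z) ≫
          C'.map (twistCoaction σ γ f) := by
  have nσ : G.map (Sig.map f) ≫ σ.app (S.obj Z) = σ.app (T.obj Z) ≫ Sig.map (T.map f) :=
    σ.naturality f
  have nγ : Sig.map (S.map f) ≫ γ.app (S.obj Z) = γ.app (T.obj Z) ≫ C'.map (Sig.map f) :=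
    γ.naturality f
  calc twistCoaction σ γ f ≫ C'.δ.app (Sig.obj Z)
      = σ.app Z ≫ Sig.map (f ≫ S.δ.app Z) ≫ γ.app (S.obj Z) ≫ C'.map (γ.app Z) := by
        simp [twistCoaction, hγδ]
    _ = (σ.app Z ≫ Sig.map (T.δ.app Z)) ≫ Sig.map (T.map f) ≫ Sig.map (χ.app Z) ≫
          (Sig.map (S.map f) ≫ γ.app (S.obj Z)) ≫ C'.map (γ.app Z) := by
        simp [hf]
    _ = G.δ.app (Sig.obj Z) ≫ G.map (σ.app Z) ≫ G.map (Sig.map f) ≫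
          (σ.app (S.obj Z) ≫ Sig.map (χ.app Z) ≫ γ.app (T.obj Z)) ≫
          C'.map (Sig.map f) ≫ C'.map (γ.app Z) := by
        simp [hσδ, nγ, reassoc_of% nσ]
    _ = G.δ.app (Sig.obj Z) ≫ G.map (twistCoaction σ γ f) ≫ τ.app (Sig.obj Z) ≫
          C'.map (twistCoaction σ γ f) := by
        simp [← hYB, twistCoaction]

end TwistCoaction

theorem twist_right_coalgebra_general
    (T S : Comonad B) (G C' : Comonad D)
    (χ : (S.toFunctor ⋙ T.toFunctor : B ⥤ B) ⟶ (T.toFunctor ⋙ S.toFunctor : B ⥤ B))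
    (τ : (C'.toFunctor ⋙ G.toFunctor : D ⥤ D) ⟶ (G.toFunctor ⋙ C'.toFunctor : D ⥤ D))
    -- the 1-cell `(Σ, σ, γ)`:
    (Sig : B ⥤ D)
    (σ : (Sig ⋙ G.toFunctor : B ⥤ D) ⟶ (T.toFunctor ⋙ Sig : B ⥤ D))
    (γ : (S.toFunctor ⋙ Sig : B ⥤ D) ⟶ (Sig ⋙ C'.toFunctor : B ⥤ D))
    -- `σ` is a lax morphism of comonads:
    (hσδ : ∀ Z : B,
      σ.app Z ≫ Sig.map (T.δ.app Z)
      = G.δ.app (Sig.obj Z) ≫ G.map (σ.app Z) ≫ σ.app (T.obj Z))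
    (hσε : ∀ Z : B, σ.app Z ≫ Sig.map (T.ε.app Z) = G.ε.app (Sig.obj Z))
    -- `γ` is a colax morphism of comonads:
    (hγδ : ∀ Z : B,
      γ.app Z ≫ C'.δ.app (Sig.obj Z)
      = Sig.map (S.δ.app Z) ≫ γ.app (S.obj Z) ≫ C'.map (γ.app Z))
    (hγε : ∀ Z : B, γ.app Z ≫ C'.ε.app (Sig.obj Z) = Sig.map (S.ε.app Z))
    -- the Yang–Baxter condition `(C'σ)∘(τΣ)∘(Gγ) = (γT)∘(Σχ)∘(σS)`:
    (hYB : ∀ Z : B,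
      G.map (γ.app Z) ≫ τ.app (Sig.obj Z) ≫ C'.map (σ.app Z)
      = σ.app (S.obj Z) ≫ Sig.map (χ.app Z) ≫ γ.app (T.obj Z))
    -- `(M, ρ)` is a right `χ`-coalgebra:
    (M : X ⥤ B) (ρ : (M ⋙ T.toFunctor : X ⥤ B) ⟶ (M ⋙ S.toFunctor : X ⥤ B))
    (hρ1 : ∀ x : X,
      ρ.app x ≫ S.δ.app (M.obj x)
      = T.δ.app (M.obj x) ≫ T.map (ρ.app x) ≫ χ.app (M.obj x) ≫ S.map (ρ.app x))
    (hρ2 : ∀ x : X, ρ.app x ≫ S.ε.app (M.obj x) = T.ε.app (M.obj x)) :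
    -- then `(ΣM, (γM)∘(Σρ)∘(σM))` is a right `τ`-coalgebra:
    (∀ x : X,
      (σ.app (M.obj x) ≫ Sig.map (ρ.app x) ≫ γ.app (M.obj x)) ≫
        C'.δ.app (Sig.obj (M.obj x))
      = G.δ.app (Sig.obj (M.obj x)) ≫
          G.map (σ.app (M.obj x) ≫ Sig.map (ρ.app x) ≫ γ.app (M.obj x)) ≫
          τ.app (Sig.obj (M.obj x)) ≫
          C'.map (σ.app (M.obj x) ≫ Sig.map (ρ.app x) ≫ γ.app (M.obj x))) ∧
    (∀ x : X,
      (σ.app (M.obj x) ≫ Sig.map (ρ.app x) ≫ γ.app (M.obj x)) ≫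
        C'.ε.app (Sig.obj (M.obj x))
      = G.ε.app (Sig.obj (M.obj x))) :=
  ⟨fun x ↦ twistCoaction_comul hσδ hγδ hYB (hρ1 x),
    fun x ↦ twistCoaction_counit hσε hγε (hρ2 x)⟩

theorem twist_right_coalgebra
    (T S : Comonad B) (G C' : Comonad D)
    (χ : (S.toFunctor ⋙ T.toFunctor : B ⥤ B) ⟶ (T.toFunctor ⋙ S.toFunctor : B ⥤ B))
    (τ : (C'.toFunctor ⋙ G.toFunctor : D ⥤ D) ⟶ (G.toFunctor ⋙ C'.toFunctor : D ⥤ D))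
    -- `χ` is a comonad distributive law:
    (hχ1 : ∀ Z : B, χ.app Z ≫ S.map (T.ε.app Z) = T.ε.app (S.obj Z))
    (hχ2 : ∀ Z : B, χ.app Z ≫ S.ε.app (T.obj Z) = T.map (S.ε.app Z))
    (hχ3 : ∀ Z : B, χ.app Z ≫ S.map (T.δ.app Z)
            = T.δ.app (S.obj Z) ≫ T.map (χ.app Z) ≫ χ.app (T.obj Z))
    (hχ4 : ∀ Z : B, χ.app Z ≫ S.δ.app (T.obj Z)
            = T.map (S.δ.app Z) ≫ χ.app (S.obj Z) ≫ S.map (χ.app Z))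
    -- `τ` is a comonad distributive law:
    (hτ1 : ∀ W : D, τ.app W ≫ C'.map (G.ε.app W) = G.ε.app (C'.obj W))
    (hτ2 : ∀ W : D, τ.app W ≫ C'.ε.app (G.obj W) = G.map (C'.ε.app W))
    (hτ3 : ∀ W : D, τ.app W ≫ C'.map (G.δ.app W)
            = G.δ.app (C'.obj W) ≫ G.map (τ.app W) ≫ τ.app (G.obj W))
    (hτ4 : ∀ W : D, τ.app W ≫ C'.δ.app (G.obj W)
            = G.map (C'.δ.app W) ≫ τ.app (C'.obj W) ≫ C'.map (τ.app W))
    -- the 1-cell `(Σ, σ, γ)`: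
    (Sig : B ⥤ D)
    (σ : (Sig ⋙ G.toFunctor : B ⥤ D) ⟶ (T.toFunctor ⋙ Sig : B ⥤ D))
    (γ : (S.toFunctor ⋙ Sig : B ⥤ D) ⟶ (Sig ⋙ C'.toFunctor : B ⥤ D))
    -- `σ` is a lax morphism of comonads:
    (hσδ : ∀ Z : B,
      σ.app Z ≫ Sig.map (T.δ.app Z)
      = G.δ.app (Sig.obj Z) ≫ G.map (σ.app Z) ≫ σ.app (T.obj Z))
    (hσε : ∀ Z : B, σ.app Z ≫ Sig.map (T.ε.app Z) = G.ε.app (Sig.obj Z))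
    -- `γ` is a colax morphism of comonads:
    (hγδ : ∀ Z : B,
      γ.app Z ≫ C'.δ.app (Sig.obj Z)
      = Sig.map (S.δ.app Z) ≫ γ.app (S.obj Z) ≫ C'.map (γ.app Z))
    (hγε : ∀ Z : B, γ.app Z ≫ C'.ε.app (Sig.obj Z) = Sig.map (S.ε.app Z))
    -- the Yang–Baxter condition `(C'σ)∘(τΣ)∘(Gγ) = (γT)∘(Σχ)∘(σS)`:
    (hYB : ∀ Z : B,
      G.map (γ.app Z) ≫ τ.app (Sig.obj Z) ≫ C'.map (σ.app Z)
      = σ.app (S.obj Z) ≫ Sig.map (χ.app Z) ≫ γ.app (T.obj Z))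
    -- `(M, ρ)` is a right `χ`-coalgebra:
    (M : X ⥤ B) (ρ : (M ⋙ T.toFunctor : X ⥤ B) ⟶ (M ⋙ S.toFunctor : X ⥤ B))
    (hρ1 : ∀ x : X,
      ρ.app x ≫ S.δ.app (M.obj x)
      = T.δ.app (M.obj x) ≫ T.map (ρ.app x) ≫ χ.app (M.obj x) ≫ S.map (ρ.app x))
    (hρ2 : ∀ x : X, ρ.app x ≫ S.ε.app (M.obj x) = T.ε.app (M.obj x)) :
    -- then `(ΣM, (γM)∘(Σρ)∘(σM))` is a right `τ`-coalgebra: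
    (∀ x : X,
      (σ.app (M.obj x) ≫ Sig.map (ρ.app x) ≫ γ.app (M.obj x)) ≫
        C'.δ.app (Sig.obj (M.obj x))
      = G.δ.app (Sig.obj (M.obj x)) ≫
          G.map (σ.app (M.obj x) ≫ Sig.map (ρ.app x) ≫ γ.app (M.obj x)) ≫
          τ.app (Sig.obj (M.obj x)) ≫
          C'.map (σ.app (M.obj x) ≫ Sig.map (ρ.app x) ≫ γ.app (M.obj x))) ∧
    (∀ x : X,
      (σ.app (M.obj x) ≫ Sig.map (ρ.app x) ≫ γ.app (M.obj x)) ≫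
        C'.ε.app (Sig.obj (M.obj x))
      = G.ε.app (Sig.obj (M.obj x))) :=
  twist_right_coalgebra_general T S G C' χ τ Sig σ γ hσδ hσε hγδ hγε hYB M ρ hρ1 hρ2

end Stmt17
end

section
/- On the category of sets, let L⁺ be the nonempty-list endofunctor, with monad structure given by η(x) = [x] and μ = concatenation (join), and comonad structure given by ε = head and Δ[x₁,…,x_n] = [[x₁,…,x_n],[x₂,…,x_n],…,[x_n]] (the list of nonempty suffixes). Define θ : L⁺L⁺ → L⁺L⁺ by: for a nonempty list [l₁,…,l_m] of nonempty lists with l_i = [x_{i,1},…,x_{i,n_i}], θ[l₁,…,l_m] is the list whose entries, in lexicographic order of the pairs (i,j) with 1 ≤ i ≤ m and 1 ≤ j ≤ n_i, are the nonempty lists [x_{i,j}, x_{i+1,1}, x_{i+2,1}, …, x_{m,1}]. Then θ is a natural transformation and a mixed distributive law between the monad L⁺ and the comonad L⁺: θ∘(μL⁺) = (L⁺μ)∘(θL⁺)∘(L⁺θ), θ∘(ηL⁺) = L⁺η, (ΔL⁺)∘θ = (L⁺θ)∘(θL⁺)∘(L⁺Δ), and (εL⁺)∘θ = L⁺ε.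 -/
/-!
STATEMENT 18: On the category of sets, the nonempty-list endofunctor `L⁺` carries a
monad structure (unit `η x = [x]`, multiplication = concatenation) and a comonad
structure (counit = head, comultiplication = list of nonempty suffixes).  The map
`θ : L⁺L⁺ → L⁺L⁺` sending `[l₁,…,l_m]` (with `l_i = [x_{i,1},…,x_{i,n_i}]`) to the
list of the lists `[x_{i,j}, x_{i+1,1}, …, x_{m,1}]` in lexicographic order of `(i,j)`
is a natural transformation and a mixed distributive law between the monad `L⁺` and
the comonad `L⁺`.

Nonempty lists over `X` are modelled as pairs `(x, l) : X × List X` (head and tail).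
-/

namespace Stmt18

/-- Nonempty lists over `X`, modelled as head-tail pairs. -/
abbrev NEL (X : Type*) : Type _ := X × List X

/-- The underlying list of a nonempty list. -/
def toList {X : Type*} (p : NEL X) : List X := p.1 :: p.2

/-- Functorial action of `L⁺`. -/
def mapNE {X Y : Type*} (f : X → Y) (p : NEL X) : NEL Y :=
  (f p.1, p.2.map f)

/-- The unit `η : X → L⁺X`, `x ↦ [x]`. -/
def eta {X : Type*} (x : X) : NEL X := (x, [])

/-- The multiplication `μ : L⁺L⁺X → L⁺X`, concatenation (join) of a nonempty
list of nonempty lists. -/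
def mu {X : Type*} (q : NEL (NEL X)) : NEL X :=
  (q.1.1, q.1.2 ++ q.2.flatMap toList)

/-- The counit `ε : L⁺X → X`, head. -/
def eps {X : Type*} (p : NEL X) : X := p.1

/-- The nonempty suffixes of a list, as nonempty lists. -/
def suff {X : Type*} : List X → List (NEL X)
  | [] => []
  | y :: t => (y, t) :: suff t

/-- The comultiplication `Δ : L⁺X → L⁺L⁺X`,
`[x₁,…,x_n] ↦ [[x₁,…,x_n],[x₂,…,x_n],…,[x_n]]` (the nonempty suffixes). -/
def delta {X : Type*} (p : NEL X) : NEL (NEL X) :=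
  (p, suff p.2)

/-- The tail blocks of `θ`: for a list `[l_i, …, l_m]` of nonempty lists, the
concatenation over `i ≤ k ≤ m` of the blocks `[[x_{k,j}, x_{k+1,1}, …, x_{m,1}] : j]`. -/
def blocks {X : Type*} : List (NEL X) → List (NEL X)
  | [] => []
  | l :: rest => (toList l).map (fun a => (a, rest.map Prod.fst)) ++ blocks rest

/-- The mixed distributive law `θ : L⁺L⁺X → L⁺L⁺X`: the entries of
`θ [l₁,…,l_m]`, in lexicographic order of the pairs `(i,j)`, are the nonempty
lists `[x_{i,j}, x_{i+1,1}, …, x_{m,1}]`. -/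
def theta {X : Type*} (q : NEL (NEL X)) : NEL (NEL X) :=
  ((q.1.1, q.2.map Prod.fst),
    q.1.2.map (fun a => (a, q.2.map Prod.fst)) ++ blocks q.2)

/-!
On underlying lists, `θ` is the function `blocks`, and `μ`, `Δ`, `L⁺f` become `flatMap toList`,
`suff` and `map f`. Since a nonempty list is determined by its underlying list, each law of a
mixed distributive law becomes an identity between `blocks`, `suff`, `flatMap` and `map`,
proved by induction on the outer list with the help of the rules for `blocks` and `suff` of a
concatenation.
-/

lemma toList_injective {X : Type*} : Function.Injective (toList : NEL X → List X) := by
  rintro ⟨a, l⟩ ⟨b, r⟩ h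
  simpa [toList] using h

@[simp] lemma toList_mk {X : Type*} (x : X) (l : List X) : toList (x, l) = x :: l := rfl

@[simp] lemma toList_mapNE {X Y : Type*} (f : X → Y) (p : NEL X) :
    toList (mapNE f p) = (toList p).map f := rfl

@[simp] lemma toList_mu {X : Type*} (q : NEL (NEL X)) :
    toList (mu q) = (toList q).flatMap toList := by
  simp [mu, toList]

@[simp] lemma toList_delta {X : Type*} (p : NEL X) : toList (delta p) = suff (toList p) := rfl

lemma blocks_cons {X : Type*} (l : NEL X) (rest : List (NEL X)) :
    blocks (l :: rest) = (toList l).map (fun a => (a, rest.map Prod.fst)) ++ blocks rest := rfl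

lemma toList_theta {X : Type*} (q : NEL (NEL X)) : toList (theta q) = blocks (toList q) := by
  simp [toList, theta, blocks_cons]

lemma blocks_map {X Y : Type*} (f : X → Y) (l : List (NEL X)) :
    blocks (l.map (mapNE f)) = (blocks l).map (mapNE f) := by
  induction l with
  | nil => rfl
  | cons p rest ih =>
    obtain ⟨x, l⟩ := p
    simp [blocks_cons, ih, mapNE, Function.comp_def]

lemma blocks_append {X : Type*} (l r : List (NEL X)) :
    blocks (l ++ r) = (blocks l).map (fun p => (p.1, p.2 ++ r.map Prod.fst)) ++ blocks r := by
  induction l with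
  | nil => rfl
  | cons a rest ih => simp [blocks_cons, ih, Function.comp_def]

lemma map_fst_flatMap_toList {X : Type*} (l : List (NEL (NEL X))) :
    (l.flatMap toList).map Prod.fst = (l.map (fun q => (theta q).1)).flatMap toList := by
  simp [List.map_flatMap, List.flatMap_map, toList, theta]

lemma blocks_flatMap_toList {X : Type*} (l : List (NEL (NEL X))) :
    blocks (l.flatMap toList) = (blocks (l.map theta)).map mu := by
  induction l with
  | nil => rfl
  | cons q rest ih =>
    rw [List.flatMap_cons, blocks_append, ih, List.map_cons, blocks_cons, List.map_append,
      ← toList_theta, map_fst_flatMap_toList, toList_theta]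
    simp [mu, Function.comp_def]

lemma suff_append {X : Type*} (l r : List X) :
    suff (l ++ r) = (suff l).map (fun p => (p.1, p.2 ++ r)) ++ suff r := by
  induction l with
  | nil => rfl
  | cons a rest ih => simp [suff, ih]

lemma suff_map {X Y : Type*} (f : X → Y) (l : List X) :
    suff (l.map f) = (suff l).map (mapNE f) := by
  induction l with
  | nil => rfl
  | cons a rest ih => simp [suff, ih, mapNE]

lemma suff_blocks {X : Type*} (l : List (NEL X)) :
    suff (blocks l) = (blocks (l.map delta)).map theta := by
  induction l with
  | nil => rfl
  | cons p rest ih =>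
    rw [List.map_cons, blocks_cons, blocks_cons, suff_append, suff_map, ih, toList_delta]
    simp [delta, theta, toList, suff, mapNE, Function.comp_def]

lemma theta_mapNE_mapNE {X Y : Type*} (f : X → Y) (q : NEL (NEL X)) :
    theta (mapNE (mapNE f) q) = mapNE (mapNE f) (theta q) :=
  toList_injective <| by simp only [toList_theta, toList_mapNE, blocks_map]

lemma theta_mu {X : Type*} (q : NEL (NEL (NEL X))) :
    theta (mu q) = mapNE mu (theta (mapNE theta q)) :=
  toList_injective <| by simp only [toList_theta, toList_mu, toList_mapNE, blocks_flatMap_toList]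

lemma theta_eta {X : Type*} (p : NEL X) : theta (eta p) = mapNE eta p :=
  toList_injective <| by simp [toList_theta, blocks_cons, blocks, eta]

lemma delta_theta {X : Type*} (q : NEL (NEL X)) :
    delta (theta q) = mapNE theta (theta (mapNE delta q)) :=
  toList_injective <| by simp only [toList_delta, toList_theta, toList_mapNE, suff_blocks]

lemma eps_theta {X : Type*} (q : NEL (NEL X)) : eps (theta q) = mapNE eps q := rfl

/-- `θ` is a natural transformation and a mixed distributive law between the
monad `L⁺` and the comonad `L⁺`. -/
theorem theta_mixed_distributive_law :
    -- naturality of `θ`: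
    (∀ (X Y : Type) (f : X → Y) (q : NEL (NEL X)),
      theta (mapNE (mapNE f) q) = mapNE (mapNE f) (theta q)) ∧
    -- `θ∘(μL⁺) = (L⁺μ)∘(θL⁺)∘(L⁺θ)`:
    (∀ (X : Type) (q : NEL (NEL (NEL X))),
      theta (mu q) = mapNE mu (theta (mapNE theta q))) ∧
    -- `θ∘(ηL⁺) = L⁺η`:
    (∀ (X : Type) (p : NEL X), theta (eta p) = mapNE eta p) ∧
    -- `(ΔL⁺)∘θ = (L⁺θ)∘(θL⁺)∘(L⁺Δ)`:
    (∀ (X : Type) (q : NEL (NEL X)),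
      delta (theta q) = mapNE theta (theta (mapNE delta q))) ∧
    -- `(εL⁺)∘θ = L⁺ε`:
    (∀ (X : Type) (q : NEL (NEL X)), eps (theta q) = mapNE eps q) :=
  ⟨fun _ _ => theta_mapNE_mapNE, fun _ => theta_mu, fun _ => theta_eta, fun _ => delta_theta,
    fun _ => eps_theta⟩

end Stmt18
end
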